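/- arXiv:1607.05484 — 5 statements merged into one kernel-verified Lean document; each statement's English description precedes it below -/
import Mathlib

section
/- Let G = (V,E) be an even digraph with |E| = 2k edges (counted with multiplicity) and |V| = ℓ vertices. Then the number of closed paths of length 2k that generate G is at most ℓ·(4k − 4ℓ)!. -/
/-- A multi digraph on `[N]`: a vertex set `V ⊆ [N]` together with a finite
multiset `E` of directed edges with endpoints in `V`. -/
structure MultiDigraph (N : ℕ) where
  V : Finset (Fin N)
  E : Multiset (Fin N × Fin N)
  edge_mem : ∀ e ∈ E, e.1 ∈ V ∧ e.2 ∈ V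

namespace MultiDigraph

variable {N : ℕ}

/-- Out-degree: number of edges leaving `v`, counted with multiplicity. -/
def degPlus (G : MultiDigraph N) (v : Fin N) : ℕ :=
  Multiset.card (G.E.filter fun e => e.1 = v)

/-- In-degree: number of edges entering `v`, counted with multiplicity. -/
def degMinus (G : MultiDigraph N) (v : Fin N) : ℕ :=
  Multiset.card (G.E.filter fun e => e.2 = v)

/-- A multi digraph is strongly connected if it has at least one vertex and one can
travel between any two vertices following edges of `E`. -/
def StronglyConnected (G : MultiDigraph N) : Prop :=
  G.V.Nonempty ∧ ∀ u ∈ G.V, ∀ v ∈ G.V,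
    Relation.ReflTransGen (fun a b => (a, b) ∈ G.E) u v

end MultiDigraph

/-- The multiset of adjacent pairs (edges) traversed by a path, with multiplicity.
A path of length `m` is recorded as a list of `m+1` vertices. -/
def pathEdges {N : ℕ} (P : List (Fin N)) : Multiset (Fin N × Fin N) :=
  ↑(P.zip P.tail)

/-- A (nonempty) path is closed if its first and last vertices coincide. -/
def IsClosedPath {N : ℕ} (P : List (Fin N)) : Prop :=
  P ≠ [] ∧ P.head? = P.getLast?

/-- An even path: a closed path in which every ordered pair occurs an even number of
times among the adjacent pairs. -/
def IsEvenPath {N : ℕ} (P : List (Fin N)) : Prop :=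
  IsClosedPath P ∧ ∀ e : Fin N × Fin N, Even ((pathEdges P).count e)

/-- The path `P` generates the multi digraph `G`. -/
def Generates {N : ℕ} (P : List (Fin N)) (G : MultiDigraph N) : Prop :=
  G.V = P.toFinset ∧ G.E = pathEdges P

/-- An even digraph is a multi digraph generated by an even closed path. -/
def IsEvenDigraph {N : ℕ} (G : MultiDigraph N) : Prop :=
  ∃ P : List (Fin N), IsEvenPath P ∧ Generates P G

/-- A cycle: a closed path with no repeated vertices except that the first and
last coincide (a loop is a cycle of length 1). -/
def IsCycle {N : ℕ} (P : List (Fin N)) : Prop :=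
  2 ≤ P.length ∧ P.head? = P.getLast? ∧ P.dropLast.Nodup

/-- A double cycle: the multi digraph generated by traversing a cycle twice. -/
def IsDoubleCycle {N : ℕ} (G : MultiDigraph N) : Prop :=
  ∃ C : List (Fin N), IsCycle C ∧ G.V = C.toFinset ∧ G.E = pathEdges C + pathEdges C

/-- A rooted multi digraph: a multi digraph with a distinguished edge. -/
structure RootedMultiDigraph (N : ℕ) where
  G : MultiDigraph N
  root : Fin N × Fin N
  root_mem : root ∈ G.E

/-- Isomorphism of multi digraphs on `[N]`. -/
def MultiDigraph.Iso {N : ℕ} (G G' : MultiDigraph N) : Prop :=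
  ∃ f : Fin N → Fin N, Set.InjOn f ↑G.V ∧ G.V.image f = G'.V ∧
    G.E.map (Prod.map f f) = G'.E

/-- Isomorphism of rooted multi digraphs on `[N]`. -/
def RootedMultiDigraph.Iso {N : ℕ} (G G' : RootedMultiDigraph N) : Prop :=
  ∃ f : Fin N → Fin N, Set.InjOn f ↑G.G.V ∧ G.G.V.image f = G'.G.V ∧
    G.G.E.map (Prod.map f f) = G'.G.E ∧ Prod.map f f G.root = G'.root

/-- The weight `p(G) = ∏ a_{i,j}^{n_{i,j}}` of a multi digraph. -/
def pWeight {N : ℕ} (a : Fin N → Fin N → ℝ) (G : MultiDigraph N) : ℝ :=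
  (G.E.map fun e => a e.1 e.2).prod

/-- The weight `p_r(G)` of a rooted multi digraph: the multiplicity of the root
edge is reduced by `2`. -/
def prWeight {N : ℕ} (a : Fin N → Fin N → ℝ) (G : RootedMultiDigraph N) : ℝ :=
  ((G.G.E - {G.root, G.root}).map fun e => a e.1 e.2).prod

/-- `S_h(𝒰)` for the unlabeled class of `U`. -/
noncomputable def Sh {N : ℕ} (a : Fin N → Fin N → ℝ) (U : MultiDigraph N) (h : ℕ) : ℝ :=
  2 ^ h * ({G : MultiDigraph N | U.Iso G ∧ 2 ^ h ≤ pWeight a G}.ncard : ℝ)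
    / ({G : MultiDigraph N | U.Iso G}.ncard : ℝ)

/-- `S_h(𝒰)` for the unlabeled class of a rooted digraph `U`. -/
noncomputable def ShR {N : ℕ} (a : Fin N → Fin N → ℝ) (U : RootedMultiDigraph N) (h : ℕ) : ℝ :=
  2 ^ h * ({G : RootedMultiDigraph N | U.Iso G ∧ 2 ^ h ≤ prWeight a G}.ncard : ℝ)
    / ({G : RootedMultiDigraph N | U.Iso G}.ncard : ℝ)

/-- The statistics `S(𝒰) = max(1, sup_h S_h(𝒰))` of a rooted class. -/
noncomputable def SR {N : ℕ} (a : Fin N → Fin N → ℝ) (U : RootedMultiDigraph N) : ℝ :=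
  max 1 (⨆ h : ℕ, ShR a U h)

/-- Condition `A_k` on a family of nonnegative weights. -/
def CondA (N k : ℕ) (ε B : ℝ) (a : Fin N → Fin N → ℝ) : Prop :=
  ∀ m : ℕ, 1 ≤ m → m ≤ k →
    (∀ C : MultiDigraph N, IsDoubleCycle C → Multiset.card C.E = 2 * m →
      (∑' h : ℕ, Sh a C h) ≤ (k : ℝ) ^ 2 ∧
      (∑' h : ℕ, (2 : ℝ) ^ ((h : ℝ) * ε / 2) * Sh a C h) ≤ (k : ℝ) ^ 2 * B ^ m) ∧
    (∀ C : RootedMultiDigraph N, IsDoubleCycle C.G → Multiset.card C.G.E = 2 * m →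
      (∑' h : ℕ, ShR a C h) ≤ (k : ℝ) ^ 2)

private lemma my_path_eq_of_filter_eq {α : Type*} [DecidableEq α] :
    ∀ (P Q : List α), P.length = Q.length → P.head? = Q.head? →
      (∀ v : α, (P.zip P.tail).filter (fun e => e.1 = v)
        = (Q.zip Q.tail).filter (fun e => e.1 = v)) → P = Q := by
  intro P
  induction P with
  | nil =>
    intro Q hl _ _
    exact (List.length_eq_zero_iff.mp hl.symm).symm
  | cons a P' IH =>
    intro Q hl hh hf
    obtain ⟨b, Q', rfl⟩ : ∃ b Q', Q = b :: Q' := by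
      cases Q with
      | nil => simp at hl
      | cons b Q' => exact ⟨b, Q', rfl⟩
    obtain rfl : a = b := by simpa using hh
    cases P' with
    | nil =>
      cases Q' with
      | nil => rfl
      | cons _ _ => simp at hl
    | cons x rest =>
      obtain ⟨y, rest', rfl⟩ : ∃ y Q'', Q' = y :: Q'' := by
        cases Q' with
        | nil => simp at hl
        | cons y Q'' => exact ⟨y, Q'', rfl⟩
      have h1 := hf a
      simp only [List.tail_cons, List.zip_cons_cons, List.filter_cons, decide_eq_true_eq,
        if_pos rfl, if_true] at h1
      rw [List.cons.injEq, Prod.mk.injEq] at h1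
      obtain ⟨⟨-, rfl⟩, hta⟩ := h1
      congr 1
      apply IH
      · simpa using hl
      · rfl
      · intro v
        by_cases hv : a = v
        · subst hv; exact hta
        · have h2 := hf v
          simp only [List.tail_cons, List.zip_cons_cons, List.filter_cons,
            decide_eq_true_eq, if_neg hv] at h2
          exact h2

private lemma my_card_eq_sum_filter {α : Type*} [DecidableEq α] (V : Finset α) :
    ∀ (F : Multiset (α × α)), (∀ e ∈ F, e.1 ∈ V) →
      Multiset.card F = ∑ v ∈ V, Multiset.card (F.filter fun e => e.1 = v) := by
  intro F
  induction F using Multiset.induction_on with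
  | empty => simp
  | cons a s IH =>
    intro h
    have ha : a.1 ∈ V := h a (Multiset.mem_cons_self a s)
    have hs := IH (fun e he => h e (Multiset.mem_cons_of_mem he))
    have key : ∀ v, Multiset.card (Multiset.filter (fun e => e.1 = v) (a ::ₘ s))
        = (if a.1 = v then 1 else 0) + Multiset.card (Multiset.filter (fun e => e.1 = v) s) := by
      intro v
      rw [Multiset.filter_cons]
      split <;> simp [Nat.add_comm]
    simp only [key, Finset.sum_add_distrib, Finset.sum_ite_eq, ha, if_pos, Multiset.card_cons]
    omega

/-- **Counting paths on digraphs.** If `G` is an even digraph with `2k` edges (with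
multiplicity) and `ℓ` vertices, then the number of closed paths of length `2k`
generating `G` is at most `ℓ · (4k - 4ℓ)!`. -/
theorem count_paths_generating_even_digraph {N : ℕ} (G : MultiDigraph N) (k ℓ : ℕ)
    (hG : IsEvenDigraph G) (hE : Multiset.card G.E = 2 * k) (hV : G.V.card = ℓ) :
    {P : List (Fin N) | P.length = 2 * k + 1 ∧ IsClosedPath P ∧ Generates P G}.ncard
      ≤ ℓ * Nat.factorial (4 * k - 4 * ℓ) := by
  classical
  set S := {P : List (Fin N) | P.length = 2 * k + 1 ∧ IsClosedPath P ∧ Generates P G} with hS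
  rcases Set.eq_empty_or_nonempty S with hSe | ⟨P₀, hP₀⟩
  · simp [hSe]
  obtain ⟨hP₀len, ⟨hP₀ne, hP₀cl⟩, hP₀V, hP₀E⟩ :
      P₀.length = 2 * k + 1 ∧ (P₀ ≠ [] ∧ P₀.head? = P₀.getLast?) ∧
        G.V = P₀.toFinset ∧ G.E = pathEdges P₀ := hP₀
  -- even counts of edges
  obtain ⟨Pe, ⟨_, hPeEven⟩, _, hPeE⟩ := hG
  have hEvenE : ∀ e, Even (Multiset.count e G.E) := fun e => hPeE ▸ hPeEven e
  set d : Fin N → ℕ := fun v => Multiset.card (G.E.filter fun e => e.1 = v) with hd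
  have hdeven : ∀ v, Even (d v) := by
    intro v
    show Even (Multiset.card (G.E.filter fun e => e.1 = v))
    rw [← Multiset.toFinset_sum_count_eq, even_iff_two_dvd]
    apply Finset.dvd_sum
    intro e _
    rw [← even_iff_two_dvd, Multiset.count_filter]
    split
    · exact hEvenE e
    · exact Even.zero
  by_cases hk : k = 0
  · -- degenerate case: paths of length 1
    subst hk
    have hle : S.ncard ≤ ℓ := by
      have hinj0 : S.InjOn (fun P => P.head?) := by
        rintro P ⟨hPl, -, -⟩ Q ⟨hQl, -, -⟩ h
        obtain ⟨a, rfl⟩ : ∃ a, P = [a] := List.length_eq_one_iff.mp (by simpa using hPl)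
        obtain ⟨b, rfl⟩ : ∃ b, Q = [b] := List.length_eq_one_iff.mp (by simpa using hQl)
        simpa using h
      have hsub : (fun P => P.head?) '' S ⊆ ↑(G.V.image some) := by
        rintro x ⟨P, ⟨hPl, -, hPV, -⟩, rfl⟩
        obtain ⟨a, rfl⟩ : ∃ a, P = [a] := List.length_eq_one_iff.mp (by simpa using hPl)
        simp only [Finset.coe_image, Set.mem_image, Finset.mem_coe]
        exact ⟨a, by rw [hPV]; simp, rfl⟩
      calc S.ncard = ((fun P => P.head?) '' S).ncard := (Set.ncard_image_of_injOn hinj0).symm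
        _ ≤ (↑(G.V.image some) : Set (Option (Fin N))).ncard :=
            Set.ncard_le_ncard hsub (G.V.image some).finite_toSet
        _ = ℓ := by
            rw [Set.ncard_coe_finset, Finset.card_image_of_injective _ (Option.some_injective _), hV]
    calc S.ncard ≤ ℓ := hle
      _ ≤ ℓ * Nat.factorial (4 * 0 - 4 * ℓ) := by simp
  -- main case : k ≥ 1
  have hk1 : 1 ≤ k := Nat.one_le_iff_ne_zero.mpr hk
  -- degrees of vertices in V are at least 2
  have hd1 : ∀ v ∈ G.V, 1 ≤ d v := by
    intro v hv
    have hvP : v ∈ P₀ := by rw [hP₀V] at hv; exact List.mem_toFinset.mp hv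
    obtain ⟨i, hi, hiv⟩ := List.mem_iff_getElem.mp hvP
    have hzlen : (P₀.zip P₀.tail).length = 2 * k := by
      rw [List.length_zip, List.length_tail, hP₀len]
      omega
    obtain ⟨j, hj, hjv⟩ : ∃ j, ∃ hj : j < 2 * k, P₀[j]'(by omega) = v := by
      rcases Nat.lt_or_ge i (2 * k) with h | h
      · exact ⟨i, h, hiv⟩
      · refine ⟨0, by omega, ?_⟩
        have hiv' : P₀[2 * k]? = some v := by
          rw [show (2 * k) = i from by omega, List.getElem?_eq_getElem hi, hiv]
        have h1 := hP₀cl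
        rw [List.head?_eq_getElem?, List.getLast?_eq_getElem?,
          show P₀.length - 1 = 2 * k from by omega, hiv',
          List.getElem?_eq_getElem (show 0 < P₀.length from by omega)] at h1
        exact Option.some.inj h1
    have hmem : (v, P₀.tail[j]'(by rw [List.length_tail, hP₀len]; omega)) ∈ G.E := by
      rw [hP₀E]
      show _ ∈ pathEdges P₀
      rw [pathEdges, Multiset.mem_coe]
      have hz : (P₀.zip P₀.tail)[j]'(by omega) =
          (P₀[j]'(by omega), P₀.tail[j]'(by rw [List.length_tail, hP₀len]; omega)) :=
        List.getElem_zip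
      rw [hjv] at hz
      exact hz ▸ List.getElem_mem _
    have hfm : (v, P₀.tail[j]'(by rw [List.length_tail, hP₀len]; omega)) ∈
        G.E.filter fun e => e.1 = v := Multiset.mem_filter.mpr ⟨hmem, rfl⟩
    show 1 ≤ Multiset.card (G.E.filter fun e => e.1 = v)
    have := Multiset.card_pos.mpr (show (G.E.filter fun e => e.1 = v) ≠ 0 from
      fun h0 => by simp [h0] at hfm)
    omega
  have hd2 : ∀ v ∈ G.V, 2 ≤ d v := by
    intro v hv
    obtain ⟨c, hc⟩ := hdeven v
    have := hd1 v hv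
    omega
  have hd0 : ∀ v, v ∉ G.V → d v = 0 := by
    intro v hv
    show Multiset.card (G.E.filter fun e => e.1 = v) = 0
    rw [Multiset.card_eq_zero, Multiset.filter_eq_nil]
    intro e he hev
    exact hv (hev ▸ (G.edge_mem e he).1)
  -- sum of degrees
  have hsum : ∑ v ∈ G.V, d v = 2 * k := by
    rw [← my_card_eq_sum_filter G.V G.E (fun e he => (G.edge_mem e he).1), hE]
  have hsum4 : ∑ v ∈ G.V, (2 * d v - 4) = 4 * k - 4 * ℓ := by
    have h1 : ∑ v ∈ G.V, ((2 * d v - 4) + 4) = ∑ v ∈ G.V, 2 * d v :=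
      Finset.sum_congr rfl fun v hv => by have := hd2 v hv; omega
    rw [Finset.sum_add_distrib, Finset.sum_const, smul_eq_mul, hV, ← Finset.mul_sum, hsum] at h1
    omega
  -- the encoding
  set L : Fin N → Finset (List (Fin N × Fin N)) :=
    fun v => ((G.E.filter fun e => e.1 = v).toList).permutations.toFinset with hL
  set T : Finset (Option (Fin N) × (Fin N → List (Fin N × Fin N))) :=
    (G.V.image some) ×ˢ Fintype.piFinset L with hT
  set Φ : List (Fin N) → Option (Fin N) × (Fin N → List (Fin N × Fin N)) :=
    fun P => (P.head?, fun v => (P.zip P.tail).filter (fun e => e.1 = v)) with hΦ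
  have hmem : ∀ P ∈ S, Φ P ∈ T := by
    rintro P ⟨hlen, hcl, hPV, hPE⟩
    rw [hT, Finset.mem_product]
    constructor
    · obtain ⟨a, Pt, rfl⟩ : ∃ a Pt, P = a :: Pt := by
        cases P with
        | nil => simp at hlen
        | cons a Pt => exact ⟨a, Pt, rfl⟩
      show (a :: Pt).head? ∈ G.V.image some
      rw [Finset.mem_image]
      exact ⟨a, by rw [hPV]; simp, rfl⟩
    · rw [Fintype.mem_piFinset]
      intro v
      show ((P.zip P.tail).filter (fun e => e.1 = v)) ∈ L v
      rw [hL, List.mem_toFinset, List.mem_permutations, ← Multiset.coe_eq_coe,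
        Multiset.coe_toList, hPE, pathEdges, Multiset.filter_coe]
  have hinj : S.InjOn Φ := by
    rintro P ⟨hPl, -, -⟩ Q ⟨hQl, -, -⟩ hPQ
    have h1 : P.head? = Q.head? := congrArg Prod.fst hPQ
    have h2 : ∀ v, (P.zip P.tail).filter (fun e => e.1 = v)
        = (Q.zip Q.tail).filter (fun e => e.1 = v) :=
      fun v => congrFun (congrArg Prod.snd hPQ) v
    exact my_path_eq_of_filter_eq P Q (by rw [hPl, hQl]) h1 h2
  -- per-vertex bound
  have hLcard : ∀ v, (L v).card ≤ Nat.factorial (2 * d v - 4) := by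
    intro v
    have hcard : (L v).card ≤ Nat.factorial (d v) := by
      calc (L v).card ≤ _ := List.toFinset_card_le _
        _ = Nat.factorial (d v) := by
            rw [List.length_permutations, Multiset.length_toList]
    rcases eq_or_ne (d v) 2 with h2 | h2
    · -- d v = 2 : the out-multiset is {e, e}
      have hm2 : Multiset.card (G.E.filter fun e => e.1 = v) = 2 := h2
      obtain ⟨e, he⟩ : ∃ e, e ∈ (G.E.filter fun e => e.1 = v) := by
        rw [← Multiset.card_pos_iff_exists_mem, hm2]; omega
      have hce : Multiset.count e (G.E.filter fun e => e.1 = v) = 2 := by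
        have ha := Multiset.one_le_count_iff_mem.mpr he
        have hb := Multiset.count_le_card e (G.E.filter fun e => e.1 = v)
        rw [hm2] at hb
        have hev : Even (Multiset.count e (G.E.filter fun e => e.1 = v)) := by
          rw [Multiset.count_filter]
          split
          · exact hEvenE e
          · exact Even.zero
        obtain ⟨c, hc⟩ := hev
        omega
      have hall : ∀ x ∈ (G.E.filter fun e => e.1 = v), e = x :=
        Multiset.count_eq_card.mp (by rw [hce, hm2])
      have key : ∀ q ∈ L v, q = [e, e] := by
        intro q hq
        rw [hL, List.mem_toFinset, List.mem_permutations] at hq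
        have hql : q.length = 2 := by
          rw [hq.length_eq, Multiset.length_toList, hm2]
        have hqe : ∀ b ∈ q, b = e := by
          intro b hb
          have hbm : b ∈ (G.E.filter fun e => e.1 = v) := by
            rw [← Multiset.mem_toList]
            exact hq.mem_iff.mp hb
          exact (hall b hbm).symm
        have := List.eq_replicate_iff.mpr ⟨hql, hqe⟩
        simpa using this
      have hone : (L v).card ≤ 1 :=
        Finset.card_le_one.mpr fun a ha b hb => (key a ha).trans (key b hb).symm
      calc (L v).card ≤ 1 := hone
        _ = Nat.factorial (2 * d v - 4) := by norm_num [h2, Nat.factorial]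
    · obtain ⟨c, hc⟩ := hdeven v
      have : d v = 0 ∨ 4 ≤ d v := by omega
      rcases this with h0 | h4
      · rw [h0] at hcard ⊢
        simpa using hcard
      · exact hcard.trans (Nat.factorial_le (by omega))
  -- put everything together
  calc S.ncard = (Φ '' S).ncard := (Set.ncard_image_of_injOn hinj).symm
    _ ≤ T.card := by
        rw [← Set.ncard_coe_finset T]
        refine Set.ncard_le_ncard ?_ T.finite_toSet
        rintro x ⟨P, hP, rfl⟩
        exact hmem P hP
    _ = ℓ * ∏ v, (L v).card := by
        rw [hT, Finset.card_product, Fintype.card_piFinset,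
          Finset.card_image_of_injective _ (Option.some_injective _), hV]
    _ ≤ ℓ * ∏ v, Nat.factorial (2 * d v - 4) := by
        refine Nat.mul_le_mul_left _ (Finset.prod_le_prod' ?_)
        intro v _
        exact hLcard v
    _ = ℓ * ∏ v ∈ G.V, Nat.factorial (2 * d v - 4) := by
        congr 1
        refine (Finset.prod_subset (Finset.subset_univ _) ?_).symm
        intro v _ hv
        rw [hd0 v hv]
        norm_num [Nat.factorial]
    _ ≤ ℓ * Nat.factorial (∑ v ∈ G.V, (2 * d v - 4)) :=
        Nat.mul_le_mul_left _ (Nat.le_of_dvd (Nat.factorial_pos _)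
          (Nat.prod_factorial_dvd_factorial_sum _ _))
    _ = ℓ * Nat.factorial (4 * k - 4 * ℓ) := by rw [hsum4]
end

section
/- For any k, N ∈ ℕ and 1 ≤ ℓ ≤ min{k, N}, let 𝒢_N(k,ℓ) be the set of rooted even digraphs G = (V,E,ρ) with V ⊆ [N], |V| = ℓ, and |E| = 2k (edges counted with multiplicity). Then |𝒢_N(k,ℓ)| ≤ N^ℓ · k^{2(k−ℓ)+1}. -/
/-
An even closed path of length `2k` traverses every arc an even number of times, so its arc
multiset is `F + F`. The half `F` is balanced (in-degree equals out-degree at every vertex) and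
connected, so by Euler's theorem (Hierholzer's splicing argument) it is the arc multiset of a
closed walk of length `k` through exactly the `ℓ` vertices of the digraph. A rooted even digraph
is therefore determined by a word `f : Fin k → Fin N` with `ℓ` distinct letters together with the
position of its root along the walk. Stripping the first letter shows that there are at most
`N^ℓ k^(k-ℓ) C(k,ℓ) ≤ N^ℓ k^(2(k-ℓ))` such words, and there are `k` positions.
-/

open Finset

section Words

theorem Fin.image_univ_cons {α : Type*} [DecidableEq α] {k : ℕ} (a : α) (g : Fin k → α) :
    univ.image (Fin.cons a g : Fin (k + 1) → α) = insert a (univ.image g) := by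
  ext x
  simp [Fin.exists_fin_succ, eq_comm]

variable (α : Type*) [Fintype α] [DecidableEq α]

def wordsWithNumLetters (k ℓ : ℕ) : Finset (Fin k → α) :=
  univ.filter fun f => #(univ.image f) = ℓ

variable {α}

theorem wordsWithNumLetters_succ_succ_subset (k ℓ : ℕ) :
    wordsWithNumLetters α (k + 1) (ℓ + 1) ⊆
      (univ ×ˢ wordsWithNumLetters α k ℓ).image (fun p => Fin.cons p.1 p.2) ∪
      (univ ×ˢ wordsWithNumLetters α k (ℓ + 1)).image (fun p => Fin.cons (p.2 p.1) p.2) := by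
  intro f hf
  obtain ⟨a, g, rfl⟩ : ∃ a g, f = Fin.cons a g := ⟨f 0, Fin.tail f, (Fin.cons_self_tail f).symm⟩
  simp only [wordsWithNumLetters, mem_filter, mem_univ, true_and, Fin.image_univ_cons] at hf
  by_cases ha : a ∈ univ.image g
  · obtain ⟨i, -, rfl⟩ := mem_image.1 ha
    refine mem_union_right _ (mem_image.2 ⟨(i, g), ?_, rfl⟩)
    simpa [wordsWithNumLetters, insert_eq_of_mem ha] using hf
  · refine mem_union_left _ (mem_image.2 ⟨(a, g), ?_, rfl⟩)
    simpa [wordsWithNumLetters, card_insert_of_notMem ha] using hf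

theorem card_wordsWithNumLetters_succ_succ_le (k ℓ : ℕ) :
    #(wordsWithNumLetters α (k + 1) (ℓ + 1)) ≤
      Fintype.card α * #(wordsWithNumLetters α k ℓ) +
        k * #(wordsWithNumLetters α k (ℓ + 1)) := by
  refine (card_le_card (wordsWithNumLetters_succ_succ_subset k ℓ)).trans ?_
  refine (card_union_le _ _).trans (add_le_add ?_ ?_) <;>
    exact card_image_le.trans (by simp [card_product])

theorem card_wordsWithNumLetters_le (k ℓ : ℕ) :
    #(wordsWithNumLetters α k ℓ) ≤ Fintype.card α ^ ℓ * k ^ (k - ℓ) * k.choose ℓ := by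
  induction k generalizing ℓ with
  | zero => cases ℓ <;> simp [wordsWithNumLetters]
  | succ k ih =>
    cases ℓ with
    | zero => simp [wordsWithNumLetters, univ_eq_empty_iff]
    | succ ℓ =>
      set N := Fintype.card α
      have hpow : k ^ (k - ℓ) ≤ (k + 1) ^ (k - ℓ) := Nat.pow_le_pow_left k.le_succ _
      have hshift : k * k ^ (k - (ℓ + 1)) * k.choose (ℓ + 1) ≤
          k ^ (k - ℓ) * k.choose (ℓ + 1) := by
        rcases lt_or_ge k (ℓ + 1) with h | h
        · simp [Nat.choose_eq_zero_of_lt h]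
        · rw [← pow_succ', show k - (ℓ + 1) + 1 = k - ℓ by omega]
      calc #(wordsWithNumLetters α (k + 1) (ℓ + 1))
          ≤ N * (N ^ ℓ * k ^ (k - ℓ) * k.choose ℓ) +
              k * (N ^ (ℓ + 1) * k ^ (k - (ℓ + 1)) * k.choose (ℓ + 1)) :=
            (card_wordsWithNumLetters_succ_succ_le k ℓ).trans
              (add_le_add (Nat.mul_le_mul_left _ (ih ℓ)) (Nat.mul_le_mul_left _ (ih (ℓ + 1))))
        _ = N ^ (ℓ + 1) *
              (k ^ (k - ℓ) * k.choose ℓ + k * k ^ (k - (ℓ + 1)) * k.choose (ℓ + 1)) := by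
            ring
        _ ≤ N ^ (ℓ + 1) *
              ((k + 1) ^ (k - ℓ) * k.choose ℓ + (k + 1) ^ (k - ℓ) * k.choose (ℓ + 1)) :=
            Nat.mul_le_mul_left _ (add_le_add (Nat.mul_le_mul_right _ hpow)
              (hshift.trans (Nat.mul_le_mul_right _ hpow)))
        _ = N ^ (ℓ + 1) * (k + 1) ^ (k + 1 - (ℓ + 1)) * (k + 1).choose (ℓ + 1) := by
            rw [Nat.choose_succ_succ', Nat.add_sub_add_right]; ring

end Words

theorem Multiset.exists_add_self_eq_of_forall_even_count {α : Type*} [DecidableEq α]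
    (E : Multiset α) (h : ∀ e, Even (E.count e)) : ∃ F, F + F = E := by
  refine ⟨∑ e ∈ E.toFinset, Multiset.replicate (E.count e / 2) e, Multiset.ext.2 fun x => ?_⟩
  have hx := Nat.even_iff.1 (h x)
  rw [Multiset.count_add, Multiset.count_sum']
  simp only [Multiset.count_replicate, Finset.sum_ite_eq', Multiset.mem_toFinset]
  split_ifs with hmem
  · omega
  · simp [Multiset.count_eq_zero_of_notMem hmem]

theorem Set.ncard_le_card_of_exists_code {α β : Type*} {s : Set α} {t : Finset β}
    (Encodes : β → α → Prop) (hex : ∀ a ∈ s, ∃ c ∈ t, Encodes c a)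
    (huniq : ∀ c a a', Encodes c a → Encodes c a' → a = a') : s.ncard ≤ #t := by
  rcases s.eq_empty_or_nonempty with rfl | ⟨a₀, ha₀⟩
  · simp
  have : Nonempty β := ⟨(hex a₀ ha₀).choose⟩
  choose! code hcode_mem hcode using hex
  calc s.ncard ≤ (t : Set β).ncard :=
        Set.ncard_le_ncard_of_injOn code hcode_mem
          (fun a ha a' ha' h => huniq _ a a' (hcode a ha) (h ▸ hcode a' ha')) t.finite_toSet
    _ = #t := Set.ncard_coe_finset t

/-- For a balanced arc multiset this is strong connectivity of its support, phrased through
forward-closed vertex sets so that no walks are needed to state it. -/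
def ForwardConnected {α : Type*} (A : Set (α × α)) : Prop :=
  ∀ S : Set α, (∃ e ∈ A, e.1 ∈ S) → (∀ e ∈ A, e.1 ∈ S → e.2 ∈ S) → ∀ e ∈ A, e.1 ∈ S

def cyclicPath {α : Type*} (M : List α) : List α := M ++ M.take 1

section PathEdges

variable {N : ℕ}

@[simp] theorem pathEdges_nil : pathEdges ([] : List (Fin N)) = 0 := rfl

@[simp] theorem pathEdges_singleton (a : Fin N) : pathEdges [a] = 0 := rfl

@[simp] theorem pathEdges_cons_cons (a b : Fin N) (l : List (Fin N)) :
    pathEdges (a :: b :: l) = (a, b) ::ₘ pathEdges (b :: l) := rfl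

theorem card_pathEdges (l : List (Fin N)) : Multiset.card (pathEdges l) = l.length - 1 := by
  simp [pathEdges]

theorem mem_of_mem_pathEdges {l : List (Fin N)} {e : Fin N × Fin N} (he : e ∈ pathEdges l) :
    e.1 ∈ l ∧ e.2 ∈ l :=
  have h := List.of_mem_zip (Multiset.mem_coe.1 he)
  ⟨h.1, List.mem_of_mem_tail h.2⟩

theorem pathEdges_append_cons (l₁ : List (Fin N)) (a : Fin N) (l₂ : List (Fin N)) :
    pathEdges (l₁ ++ a :: l₂) = pathEdges (l₁ ++ [a]) + pathEdges (a :: l₂) := by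
  induction l₁ with
  | nil => simp
  | cons b l₁ ih =>
    cases l₁ with
    | nil => simp
    | cons c l₁ => simpa [Multiset.cons_add] using ih

theorem map_fst_pathEdges (l : List (Fin N)) : (pathEdges l).map Prod.fst = ↑l.dropLast := by
  induction l with
  | nil => rfl
  | cons a l ih => cases l with
    | nil => rfl
    | cons b l => simp [ih]

theorem map_snd_pathEdges (l : List (Fin N)) : (pathEdges l).map Prod.snd = ↑l.tail := by
  induction l with
  | nil => rfl
  | cons a l ih => cases l with
    | nil => rfl
    | cons b l => simp [ih]

theorem toFinset_dropLast_eq (l : List (Fin N)) :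
    l.dropLast.toFinset = ((pathEdges l).map Prod.fst).toFinset := by
  rw [map_fst_pathEdges, List.toFinset_coe]

theorem IsClosedPath.exists_eq_cons_append {P : List (Fin N)} (hP : IsClosedPath P)
    (h : 2 ≤ P.length) : ∃ a s, P = a :: (s ++ [a]) := by
  obtain ⟨a, t, rfl⟩ := List.exists_cons_of_ne_nil hP.1
  rcases List.eq_nil_or_concat t with rfl | ⟨s, b, rfl⟩
  · simp at h
  have hab : some a = some b := by
    have h2 := hP.2
    rwa [List.concat_eq_append, ← List.cons_append, List.getLast?_concat] at h2
  exact ⟨a, s, by rw [Option.some_inj.1 hab, List.concat_eq_append]⟩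

theorem IsClosedPath.map_fst_pathEdges_eq_map_snd {P : List (Fin N)} (hP : IsClosedPath P) :
    (pathEdges P).map Prod.fst = (pathEdges P).map Prod.snd := by
  rcases lt_or_ge P.length 2 with h | h
  · have h0 : pathEdges P = 0 := Multiset.card_eq_zero.1 (by rw [card_pathEdges]; omega)
    rw [h0, Multiset.map_zero, Multiset.map_zero]
  obtain ⟨a, s, rfl⟩ := hP.exists_eq_cons_append h
  rw [map_fst_pathEdges, map_snd_pathEdges, Multiset.coe_eq_coe, ← List.cons_append,
    List.dropLast_concat]
  exact (List.perm_append_singleton a s).symm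

theorem IsClosedPath.toFinset_dropLast {P : List (Fin N)} (hP : IsClosedPath P)
    (h : 2 ≤ P.length) : P.dropLast.toFinset = P.toFinset := by
  obtain ⟨a, s, rfl⟩ := hP.exists_eq_cons_append h
  rw [← List.cons_append, List.dropLast_concat]
  ext x
  simp

theorem IsClosedPath.cyclicPath_dropLast {P : List (Fin N)} (hP : IsClosedPath P)
    (h : 2 ≤ P.length) : cyclicPath P.dropLast = P := by
  obtain ⟨a, s, rfl⟩ := hP.exists_eq_cons_append h
  rw [← List.cons_append, List.dropLast_concat]
  rfl

theorem forall_mem_of_head_mem {S : Set (Fin N)} {a : Fin N} {t : List (Fin N)}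
    (hS : ∀ e ∈ pathEdges (a :: t), e.1 ∈ S → e.2 ∈ S) (ha : a ∈ S) : ∀ x ∈ a :: t, x ∈ S := by
  induction t generalizing a with
  | nil => simpa using ha
  | cons b t ih =>
    have hb : b ∈ S := hS (a, b) (by simp) ha
    have ht := ih (fun e he => hS e (Multiset.mem_cons_of_mem he)) hb
    simpa [ha] using ht

theorem IsClosedPath.forwardConnected {P : List (Fin N)} (hP : IsClosedPath P) :
    ForwardConnected {e | e ∈ pathEdges P} := by
  rintro S ⟨e, he, heS⟩ hS e' he'
  obtain ⟨l₁, l₂, hl⟩ := List.append_of_mem (mem_of_mem_pathEdges he).1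
  have hsuffix : ∀ x ∈ e.1 :: l₂, x ∈ S := by
    refine forall_mem_of_head_mem (fun f hf => hS f ?_) heS
    show f ∈ pathEdges P
    rw [hl, pathEdges_append_cons]
    exact Multiset.mem_add.2 (Or.inr hf)
  obtain ⟨a, t, rfl⟩ := List.exists_cons_of_ne_nil hP.1
  -- the path is closed, so its first vertex is its last one, which lies on the suffix
  have hlast : (e.1 :: l₂).getLast? = some a := by
    rw [← List.getLast?_append_cons l₁, ← hl, ← hP.2, List.head?_cons]
  exact forall_mem_of_head_mem hS (hsuffix a (List.mem_of_getLast? hlast)) _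
    (mem_of_mem_pathEdges he').1

theorem exists_path_of_map_fst_add_eq (F : Multiset (Fin N × Fin N)) {v w : Fin N}
    (h : F.map Prod.fst + {v} = F.map Prod.snd + {w}) :
    ∃ M, (w :: M).getLast? = some v ∧ pathEdges (w :: M) ≤ F := by
  induction F using Multiset.strongInductionOn generalizing w with
  | _ F ih =>
  by_cases hwv : w = v
  · exact ⟨[], by simp [hwv], by simp⟩
  obtain ⟨e, he, rfl⟩ : ∃ e ∈ F, e.1 = w := by
    have hw : w ∈ F.map Prod.fst + {v} := h ▸ by simp
    simpa [hwv] using hw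
  rw [← Multiset.cons_erase he] at h
  have h' : (F.erase e).map Prod.fst + {v} = (F.erase e).map Prod.snd + {e.2} := by
    refine add_left_cancel (a := {e.1}) ?_
    simpa [← Multiset.singleton_add, add_comm, add_left_comm, add_assoc] using h
  obtain ⟨M, hMv, hMF⟩ := ih _ (Multiset.erase_lt.2 he) h'
  refine ⟨e.2 :: M, by rwa [List.getLast?_cons_cons], ?_⟩
  rw [pathEdges_cons_cons, ← Multiset.cons_erase he]
  exact Multiset.cons_le_cons e hMF

theorem exists_isClosedPath_of_mem {F : Multiset (Fin N × Fin N)}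
    (hF : F.map Prod.fst = F.map Prod.snd) {e : Fin N × Fin N} (he : e ∈ F) :
    ∃ C : List (Fin N), IsClosedPath C ∧ C.head? = some e.1 ∧ e ∈ pathEdges C ∧
      pathEdges C ≤ F := by
  rw [← Multiset.cons_erase he] at hF
  have h' : (F.erase e).map Prod.fst + {e.1} = (F.erase e).map Prod.snd + {e.2} := by
    simpa [← Multiset.singleton_add, add_comm] using hF
  obtain ⟨M, hMv, hMF⟩ := exists_path_of_map_fst_add_eq _ h'
  refine ⟨e.1 :: e.2 :: M, ⟨by simp, by rw [List.getLast?_cons_cons, hMv]; rfl⟩, rfl, by simp, ?_⟩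
  rw [pathEdges_cons_cons, ← Multiset.cons_erase he]
  exact Multiset.cons_le_cons e hMF

theorem IsClosedPath.exists_splice {L C : List (Fin N)} (hL : IsClosedPath L) {u : Fin N}
    (hu : u ∈ L) (hC : IsClosedPath C) (hCu : C.head? = some u) :
    ∃ L', IsClosedPath L' ∧ L'.head? = L.head? ∧ pathEdges L' = pathEdges L + pathEdges C := by
  obtain ⟨A, B, rfl⟩ := List.append_of_mem hu
  obtain ⟨C₁, rfl⟩ : ∃ C₁, C = u :: C₁ := by
    cases C with
    | nil => simp at hCu
    | cons b C₁ => exact ⟨C₁, by simpa using hCu⟩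
  obtain ⟨C₂, hC₂⟩ := List.getLast?_eq_some_iff.1 (hC.2 ▸ hCu)
  have hhead : (A ++ u :: (C₁ ++ B)).head? = (A ++ u :: B).head? := by
    simp [List.head?_append]
  have hlast : (A ++ u :: (C₁ ++ B)).getLast? = (A ++ u :: B).getLast? := by
    rw [List.getLast?_append_cons, List.getLast?_append_cons, ← List.cons_append, hC₂,
      List.append_assoc, List.singleton_append, List.getLast?_append_cons]
  refine ⟨A ++ u :: (C₁ ++ B), ⟨by simp, hhead.trans (hL.2.trans hlast.symm)⟩, hhead, ?_⟩
  rw [pathEdges_append_cons, ← List.cons_append, hC₂, List.append_assoc, List.singleton_append,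
    pathEdges_append_cons C₂, ← hC₂, pathEdges_append_cons A u B]
  abel

theorem ForwardConnected.exists_mem_tsub_pathEdges {F : Multiset (Fin N × Fin N)}
    (hconn : ForwardConnected {e | e ∈ F}) {L : List (Fin N)} {e₀ : Fin N × Fin N}
    (he₀ : e₀ ∈ F) (hL : e₀.1 ∈ L) (hne : F - pathEdges L ≠ 0) :
    ∃ r ∈ F - pathEdges L, r.1 ∈ L := by
  by_cases hclosed : ∀ e ∈ F, e.1 ∈ L → e.2 ∈ L
  · obtain ⟨r, hr⟩ := Multiset.exists_mem_of_ne_zero hne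
    exact ⟨r, hr, hconn {x | x ∈ L} ⟨e₀, he₀, hL⟩ hclosed r
      (Multiset.mem_of_le (Multiset.sub_le_self _ _) hr)⟩
  · push Not at hclosed
    obtain ⟨e, he, he₁, he₂⟩ := hclosed
    have heL : e ∉ pathEdges L := fun h => he₂ (mem_of_mem_pathEdges h).2
    refine ⟨e, ?_, he₁⟩
    rw [← Multiset.count_pos, Multiset.count_sub, Multiset.count_eq_zero_of_notMem heL]
    simpa using Multiset.count_pos.2 he

theorem exists_isClosedPath_pathEdges_eq {F : Multiset (Fin N × Fin N)} (hF : F ≠ 0)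
    (hbal : F.map Prod.fst = F.map Prod.snd) (hconn : ForwardConnected {e | e ∈ F}) :
    ∃ L, IsClosedPath L ∧ pathEdges L = F := by
  obtain ⟨e₀, he₀⟩ := Multiset.exists_mem_of_ne_zero hF
  suffices h : ∀ n (L : List (Fin N)), IsClosedPath L → L.head? = some e₀.1 →
      pathEdges L ≤ F → Multiset.card F ≤ Multiset.card (pathEdges L) + n →
      ∃ L, IsClosedPath L ∧ pathEdges L = F from
    h (Multiset.card F) [e₀.1] ⟨by simp, rfl⟩ rfl (by simp) (by simp)
  intro n
  induction n with
  | zero => exact fun L hL _ hle hcard => ⟨L, hL, Multiset.eq_of_le_of_card_le hle hcard⟩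
  | succ n ih =>
    intro L hL hhead hle hcard
    by_cases heq : pathEdges L = F
    · exact ⟨L, hL, heq⟩
    have hne : F - pathEdges L ≠ 0 := fun h0 =>
      heq (le_antisymm hle (tsub_eq_zero_iff_le.1 h0))
    have hsplit : pathEdges L + (F - pathEdges L) = F := add_tsub_cancel_of_le hle
    have hbal' : (F - pathEdges L).map Prod.fst = (F - pathEdges L).map Prod.snd := by
      rw [← hsplit, Multiset.map_add, Multiset.map_add, hL.map_fst_pathEdges_eq_map_snd] at hbal
      exact add_left_cancel hbal
    obtain ⟨r, hr, hrL⟩ := hconn.exists_mem_tsub_pathEdges he₀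
      (List.mem_of_mem_head? hhead) hne
    obtain ⟨C, hC, hCr, hrC, hCle⟩ := exists_isClosedPath_of_mem hbal' hr
    obtain ⟨L', hL', hhead', hL'C⟩ := hL.exists_splice hrL hC hCr
    refine ih L' hL' (hhead'.trans hhead) ?_ ?_
    · rw [hL'C, ← hsplit]
      exact add_le_add_right hCle _
    · have := Multiset.card_pos_iff_exists_mem.2 ⟨r, hrC⟩
      rw [hL'C, Multiset.card_add]
      omega

theorem IsEvenPath.exists_pathEdges_eq_add_self {P : List (Fin N)} (hP : IsEvenPath P)
    (hne : pathEdges P ≠ 0) : ∃ L, IsClosedPath L ∧ pathEdges P = pathEdges L + pathEdges L := by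
  obtain ⟨F, hF⟩ := (pathEdges P).exists_add_self_eq_of_forall_even_count hP.2
  have hF0 : F ≠ 0 := by
    rintro rfl
    exact hne (by rw [← hF, add_zero])
  have hbal : F.map Prod.fst = F.map Prod.snd := by
    have h := hP.1.map_fst_pathEdges_eq_map_snd
    rw [← hF, Multiset.map_add, Multiset.map_add] at h
    exact nsmul_right_injective two_ne_zero (by simpa only [two_nsmul] using h)
  have hconn : ForwardConnected {e | e ∈ F} := by
    have hmem : {e | e ∈ F} = {e | e ∈ pathEdges P} := by
      ext e
      simp [← hF]
    exact hmem ▸ hP.1.forwardConnected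
  obtain ⟨L, hL, hLF⟩ := exists_isClosedPath_pathEdges_eq hF0 hbal hconn
  exact ⟨L, hL, by rw [← hF, hLF]⟩

theorem IsEvenDigraph.exists_eq_pathEdges_add_self {G : MultiDigraph N} (hG : IsEvenDigraph G)
    (hE : G.E ≠ 0) :
    ∃ L, IsClosedPath L ∧ G.V = L.dropLast.toFinset ∧ G.E = pathEdges L + pathEdges L := by
  obtain ⟨P, hP, hGV, hGE⟩ := hG
  obtain ⟨L, hL, hPL⟩ := hP.exists_pathEdges_eq_add_self (hGE ▸ hE)
  have hP2 : 2 ≤ P.length := by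
    have := Multiset.card_pos.2 (hGE ▸ hE)
    rw [card_pathEdges] at this
    omega
  refine ⟨L, hL, ?_, hGE.trans hPL⟩
  rw [hGV, ← hP.1.toFinset_dropLast hP2, toFinset_dropLast_eq, toFinset_dropLast_eq, hPL,
    Multiset.map_add, Multiset.toFinset_add, Finset.union_self]

theorem RootedMultiDigraph.ext {A B : RootedMultiDigraph N} (hV : A.G.V = B.G.V)
    (hE : A.G.E = B.G.E) (hr : A.root = B.root) : A = B := by
  obtain ⟨⟨V, E, _⟩, r, _⟩ := A
  obtain ⟨⟨V', E', _⟩, r', _⟩ := B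
  cases hV; cases hE; cases hr
  rfl

def WordEncodes {k : ℕ} (f : Fin k → Fin N) (i : Fin k) (R : RootedMultiDigraph N) : Prop :=
  R.G.V = univ.image f ∧
    R.G.E = pathEdges (cyclicPath (List.ofFn f)) + pathEdges (cyclicPath (List.ofFn f)) ∧
    ((cyclicPath (List.ofFn f)).zip (cyclicPath (List.ofFn f)).tail)[(i : ℕ)]? = some R.root

theorem WordEncodes.unique {k : ℕ} {f : Fin k → Fin N} {i : Fin k}
    {R R' : RootedMultiDigraph N} (h : WordEncodes f i R) (h' : WordEncodes f i R') : R = R' :=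
  RootedMultiDigraph.ext (h.1.trans h'.1.symm) (h.2.1.trans h'.2.1.symm)
    (Option.some_injective _ (h.2.2.symm.trans h'.2.2))

theorem exists_wordEncodes {k : ℕ} {R : RootedMultiDigraph N} (hR : IsEvenDigraph R.G)
    (hcard : Multiset.card R.G.E = 2 * k) :
    ∃ (f : Fin k → Fin N) (i : Fin k), WordEncodes f i R := by
  have hE0 : R.G.E ≠ 0 := fun h => Multiset.notMem_zero _ (h ▸ R.root_mem)
  have hk : 0 < k := by
    have := Multiset.card_pos.2 hE0
    omega
  obtain ⟨L, hL, hV, hE⟩ := hR.exists_eq_pathEdges_add_self hE0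
  have hlen : L.length = k + 1 := by
    have h := congrArg Multiset.card hE
    rw [Multiset.card_add, card_pathEdges, hcard] at h
    have := List.length_pos_iff.2 hL.1
    omega
  set f : Fin k → Fin N := fun i => L[(i : ℕ)]'(by rw [hlen]; exact Nat.lt_succ_of_lt i.isLt)
  have hf : List.ofFn f = L.dropLast :=
    List.ext_getElem (by simp [hlen]) (fun n _ _ => by simp [f])
  have hcyc : cyclicPath (List.ofFn f) = L := by rw [hf, hL.cyclicPath_dropLast (by omega)]
  have hroot : R.root ∈ L.zip L.tail := by
    have h := R.root_mem
    rw [hE, Multiset.mem_add, or_self] at h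
    exact Multiset.mem_coe.1 h
  obtain ⟨i, hi⟩ := List.mem_iff_getElem?.1 hroot
  have hik : i < k := by
    obtain ⟨h, -⟩ := List.getElem?_eq_some_iff.1 hi
    simp only [List.length_zip, List.length_tail] at h
    omega
  refine ⟨f, ⟨i, hik⟩, ?_, ?_, ?_⟩
  · rw [Fin.univ_image_def, hf, hV]
  · rw [hcyc, hE]
  · rw [hcyc]
    exact hi

end PathEdges

theorem count_rooted_even_digraphs_general (N k ℓ : ℕ) :
    {G : RootedMultiDigraph N | IsEvenDigraph G.G ∧ G.G.V.card = ℓ ∧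
        Multiset.card G.G.E = 2 * k}.ncard
      ≤ N ^ ℓ * k ^ (2 * (k - ℓ) + 1) := by
  have hchoose : k.choose ℓ ≤ k ^ (k - ℓ) := by
    rcases le_or_gt ℓ k with h | h
    · exact Nat.choose_symm h ▸ Nat.choose_le_pow k (k - ℓ)
    · simp [Nat.choose_eq_zero_of_lt h]
  calc _ ≤ #(wordsWithNumLetters (Fin N) k ℓ ×ˢ (univ : Finset (Fin k))) := by
        refine Set.ncard_le_card_of_exists_code (fun c R => WordEncodes c.1 c.2 R) ?_
          fun c R R' h h' => h.unique h'
        rintro R ⟨hR, hV, hE⟩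
        obtain ⟨f, i, hfi⟩ := exists_wordEncodes hR hE
        exact ⟨(f, i), by simp [wordsWithNumLetters, ← hfi.1, hV], hfi⟩
    _ = #(wordsWithNumLetters (Fin N) k ℓ) * k := by simp [card_product]
    _ ≤ N ^ ℓ * k ^ (k - ℓ) * k.choose ℓ * k := by
        gcongr
        simpa using card_wordsWithNumLetters_le (α := Fin N) k ℓ
    _ ≤ N ^ ℓ * k ^ (k - ℓ) * k ^ (k - ℓ) * k := by gcongr
    _ = N ^ ℓ * k ^ (2 * (k - ℓ) + 1) := by ring

/-- **Graphs counting.** For `1 ≤ ℓ ≤ min{k,N}`, the number of rooted even digraphs on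
`[N]` with `ℓ` vertices and `2k` edges (with multiplicity) is at most
`N^ℓ · k^{2(k-ℓ)+1}`. -/
theorem count_rooted_even_digraphs (N k ℓ : ℕ) (h1 : 1 ≤ ℓ) (hlk : ℓ ≤ k) (hlN : ℓ ≤ N) :
    {G : RootedMultiDigraph N | IsEvenDigraph G.G ∧ G.G.V.card = ℓ ∧
        Multiset.card G.G.E = 2 * k}.ncard
      ≤ N ^ ℓ * k ^ (2 * (k - ℓ) + 1) :=
  count_rooted_even_digraphs_general N k ℓ
end

section
/- Let X be an N×N random matrix with independent entries such that P(X_{i,j} ≠ 0) ≤ q for all i,j, where 0 ≤ q and qN < 1. Then P(ρ(X) > 0) ≤ Σ_{ℓ=1}^N (qN)^ℓ; in particular, if qN ≤ 1/2 then P(ρ(X) > 0) ≤ 2qN. -/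
/-!
If `ρ(X) > 0`, then `X` has an eigenvector `v` for a nonzero eigenvalue, and every `i` in the
support of `v` has some `j` in the support with `X i j ≠ 0`. Following such edges inside the finite
support must eventually close a cycle, so the digraph of nonzero entries of `X` has a directed
cycle. A fixed cycle through `ℓ` distinct vertices uses `ℓ` distinct entries, which are all nonzero
with probability at most `q^ℓ` by independence, and there are at most `N^ℓ` such cycles. The union
bound gives `Σ_{ℓ=1}^N (qN)^ℓ ≤ qN / (1 - qN)`, which is at most `2qN` when `qN ≤ 1/2`.
-/

open MeasureTheory ProbabilityTheory

/-- The spectral radius of a complex matrix: the largest modulus of an eigenvalue. -/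
noncomputable def specRad {N : ℕ} (X : Matrix (Fin N) (Fin N) ℂ) : ℝ :=
  sSup {r : ℝ | ∃ z ∈ spectrum ℂ X, r = ‖z‖}

open Finset Function Matrix

/-- `c 0 → c 1 → ⋯ → c (ℓ - 1) → c 0` is a directed cycle of `r` through distinct vertices. -/
def IsDirectedCycle {α : Type*} (r : α → α → Prop) {ℓ : ℕ} (c : Fin ℓ ↪ α) : Prop :=
  ∀ k, r (c k) (c (finRotate ℓ k))

theorem Function.exists_mem_periodicPts {α : Type*} [Finite α] [Nonempty α] (f : α → α) :
    ∃ x, x ∈ periodicPts f := by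
  obtain ⟨x⟩ := ‹Nonempty α›
  obtain ⟨m, n, hne, heq⟩ := Finite.exists_ne_map_eq_of_infinite (f^[·] x)
  wlog hmn : m < n generalizing m n
  · exact this n m hne.symm heq.symm (by omega)
  refine ⟨f^[m] x, mk_mem_periodicPts (n := n - m) (by omega) ?_⟩
  rw [IsPeriodicPt, IsFixedPt, ← iterate_add_apply, Nat.sub_add_cancel hmn.le]
  exact heq.symm

theorem exists_isDirectedCycle_of_forall_exists {α : Type*} [Finite α] [Nonempty α]
    {r : α → α → Prop} (h : ∀ a, ∃ b, r a b) :
    ∃ ℓ, 0 < ℓ ∧ ∃ c : Fin ℓ ↪ α, IsDirectedCycle r c := by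
  choose g hg using h
  obtain ⟨y, hy⟩ := exists_mem_periodicPts g
  have hp := minimalPeriod_pos_of_mem_periodicPts hy
  refine ⟨minimalPeriod g y, hp,
    ⟨fun k => g^[k] y, fun a b hab => Fin.ext (iterate_injOn_Iio_minimalPeriod a.isLt b.isLt hab)⟩,
    fun k => ?_⟩
  have : NeZero (minimalPeriod g y) := ⟨hp.ne'⟩
  show r (g^[k] y) (g^[(finRotate _ k : ℕ)] y)
  rw [finRotate_apply, Fin.val_add, Fin.val_one', Nat.add_mod_mod, iterate_mod_minimalPeriod_eq,
    iterate_succ_apply']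
  exact hg _

theorem Matrix.exists_isDirectedCycle_of_mulVec_eq_smul {n R : Type*} [Fintype n] [Semiring R]
    [NoZeroDivisors R] {M : Matrix n n R} {v : n → R} {z : R} (hv : v ≠ 0) (hz : z ≠ 0)
    (hMv : M *ᵥ v = z • v) : ∃ ℓ, 0 < ℓ ∧ ∃ c : Fin ℓ ↪ n, IsDirectedCycle (M · · ≠ 0) c := by
  have hnext (i : {i // v i ≠ 0}) : ∃ j : {j // v j ≠ 0}, M i j ≠ 0 := by
    have hsum : ∑ j, M i j * v j ≠ 0 := by
      change (M *ᵥ v) i ≠ 0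
      rw [hMv]
      exact mul_ne_zero hz i.2
    obtain ⟨j, -, hj⟩ := exists_ne_zero_of_sum_ne_zero hsum
    exact ⟨⟨j, right_ne_zero_of_mul hj⟩, left_ne_zero_of_mul hj⟩
  obtain ⟨i, hi⟩ := Function.ne_iff.mp hv
  have : Nonempty {i // v i ≠ 0} := ⟨⟨i, hi⟩⟩
  obtain ⟨ℓ, hℓ, c, hc⟩ := exists_isDirectedCycle_of_forall_exists hnext
  exact ⟨ℓ, hℓ, c.trans (Embedding.subtype _), hc⟩

theorem exists_ne_zero_mem_spectrum_of_specRad_pos {N : ℕ} {M : Matrix (Fin N) (Fin N) ℂ}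
    (h : 0 < specRad M) : ∃ z ∈ spectrum ℂ M, z ≠ 0 := by
  by_contra! h0
  refine h.not_ge (Real.sSup_nonpos fun r ⟨z, hz, hr⟩ => ?_)
  simp [hr, h0 z hz]

theorem exists_isDirectedCycle_of_specRad_pos {N : ℕ} {M : Matrix (Fin N) (Fin N) ℂ}
    (h : 0 < specRad M) : ∃ ℓ ∈ Icc 1 N, ∃ c : Fin ℓ ↪ Fin N, IsDirectedCycle (M · · ≠ 0) c := by
  obtain ⟨z, hz, hz0⟩ := exists_ne_zero_mem_spectrum_of_specRad_pos h
  rw [← Matrix.spectrum_toLin', ← Module.End.hasEigenvalue_iff_mem_spectrum] at hz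
  obtain ⟨v, hv⟩ := hz.exists_hasEigenvector
  obtain ⟨ℓ, hℓ, c, hc⟩ :=
    Matrix.exists_isDirectedCycle_of_mulVec_eq_smul hv.2 hz0 (by simpa using hv.apply_eq_smul)
  exact ⟨ℓ, mem_Icc.2 ⟨hℓ, by simpa using Fintype.card_le_of_embedding c⟩, c, hc⟩

section Probability

variable {Ω : Type*} [MeasurableSpace Ω] {P : Measure Ω}

theorem ProbabilityTheory.iIndepFun.measureReal_biInter_preimage_le_pow {ι β : Type*}
    [MeasurableSpace β] {Y : ι → Ω → β} (hY : iIndepFun Y P) (S : Finset ι) {s : Set β}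
    (hs : MeasurableSet s) {q : ℝ} (hq : ∀ i ∈ S, P.real (Y i ⁻¹' s) ≤ q) :
    P.real (⋂ i ∈ S, Y i ⁻¹' s) ≤ q ^ #S := by
  rw [measureReal_def, hY.measure_inter_preimage_eq_mul S (sets := fun _ => s) fun _ _ => hs,
    ENNReal.toReal_prod, ← prod_const]
  exact prod_le_prod (fun _ _ => ENNReal.toReal_nonneg) hq

variable {n β : Type*} [Zero β] [MeasurableSpace β] [MeasurableSingletonClass β]
  {X : n → n → Ω → β} {q : ℝ}

theorem measureReal_isDirectedCycle_le (hX : iIndepFun (fun p : n × n => X p.1 p.2) P)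
    (hentry : ∀ i j, P.real {ω | X i j ω ≠ 0} ≤ q) {ℓ : ℕ} (c : Fin ℓ ↪ n) :
    P.real {ω | IsDirectedCycle (X · · ω ≠ 0) c} ≤ q ^ ℓ := by
  let edge : Fin ℓ ↪ n × n :=
    ⟨fun k => (c k, c (finRotate ℓ k)), fun a b hab => c.injective (congrArg Prod.fst hab)⟩
  have hevent : {ω | IsDirectedCycle (X · · ω ≠ 0) c} =
      ⋂ p ∈ univ.map edge, (fun p : n × n => X p.1 p.2) p ⁻¹' {0}ᶜ := by
    ext ω
    simp [IsDirectedCycle, edge]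
  calc P.real {ω | IsDirectedCycle (X · · ω ≠ 0) c}
      ≤ q ^ #(univ.map edge) := hevent ▸ hX.measureReal_biInter_preimage_le_pow _
        (measurableSet_singleton 0).compl fun p _ => hentry p.1 p.2
    _ = q ^ ℓ := by simp

theorem sum_measureReal_isDirectedCycle_le [Fintype n] [DecidableEq n]
    (hX : iIndepFun (fun p : n × n => X p.1 p.2) P) (hq : 0 ≤ q)
    (hentry : ∀ i j, P.real {ω | X i j ω ≠ 0} ≤ q) (ℓ : ℕ) :
    ∑ c : Fin ℓ ↪ n, P.real {ω | IsDirectedCycle (X · · ω ≠ 0) c} ≤ (Fintype.card n * q) ^ ℓ :=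
  calc ∑ c : Fin ℓ ↪ n, P.real {ω | IsDirectedCycle (X · · ω ≠ 0) c}
      ≤ ∑ _c : Fin ℓ ↪ n, q ^ ℓ :=
        sum_le_sum fun c _ => measureReal_isDirectedCycle_le hX hentry c
    _ = (Fintype.card n).descFactorial ℓ * q ^ ℓ := by simp [Fintype.card_embedding_eq]
    _ ≤ Fintype.card n ^ ℓ * q ^ ℓ := by
        gcongr
        exact_mod_cast Nat.descFactorial_le_pow _ _
    _ = (Fintype.card n * q) ^ ℓ := (mul_pow _ _ _).symm

end Probability

theorem geom_sum_Icc_one_le_two_mul {x : ℝ} (hx₀ : 0 ≤ x) (hx : x ≤ 1 / 2) (N : ℕ) :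
    ∑ ℓ ∈ Icc 1 N, x ^ ℓ ≤ 2 * x :=
  calc ∑ ℓ ∈ Icc 1 N, x ^ ℓ = ∑ ℓ ∈ Ico 1 (N + 1), x ^ ℓ := by rw [Ico_add_one_right_eq_Icc]
    _ ≤ x ^ 1 / (1 - x) := geom_sum_Ico_le_of_lt_one hx₀ (by linarith)
    _ ≤ 2 * x := by
        rw [pow_one, div_le_iff₀ (by linarith)]
        nlinarith

theorem sparse_matrix_spectral_radius_zero_general
    {Ω : Type*} [MeasurableSpace Ω] (P : Measure Ω) [IsProbabilityMeasure P]
    {N : ℕ} (X : Fin N → Fin N → Ω → ℂ)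
    (hindep : iIndepFun
      (fun p : Fin N × Fin N => X p.1 p.2) P)
    (q : ℝ) (hq : 0 ≤ q)
    (hentry : ∀ i j, (P {ω | X i j ω ≠ 0}).toReal ≤ q) :
    (P {ω | 0 < specRad (Matrix.of fun i j => X i j ω)}).toReal ≤
      ∑ ℓ ∈ Finset.Icc 1 N, (q * N) ^ ℓ ∧
    (q * N ≤ 1 / 2 →
      (P {ω | 0 < specRad (Matrix.of fun i j => X i j ω)}).toReal ≤ 2 * (q * N)) := by
  have hcycles : {ω | 0 < specRad (Matrix.of fun i j => X i j ω)} ⊆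
      ⋃ ℓ ∈ Icc 1 N, ⋃ c ∈ (univ : Finset (Fin ℓ ↪ Fin N)),
        {ω | IsDirectedCycle (X · · ω ≠ 0) c} := by
    intro ω hω
    obtain ⟨ℓ, hℓ, c, hc⟩ := exists_isDirectedCycle_of_specRad_pos hω
    exact Set.mem_biUnion hℓ (Set.mem_biUnion (mem_univ c) hc)
  have hbound : P.real {ω | 0 < specRad (Matrix.of fun i j => X i j ω)} ≤
      ∑ ℓ ∈ Icc 1 N, (q * N) ^ ℓ :=
    calc _ ≤ ∑ ℓ ∈ Icc 1 N, ∑ c : Fin ℓ ↪ Fin N, P.real {ω | IsDirectedCycle (X · · ω ≠ 0) c} :=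
          (measureReal_mono hcycles (measure_ne_top _ _)).trans <|
            (measureReal_biUnion_finset_le _ _).trans <|
              sum_le_sum fun ℓ _ => measureReal_biUnion_finset_le _ _
      _ ≤ ∑ ℓ ∈ Icc 1 N, (q * N) ^ ℓ := sum_le_sum fun ℓ _ => by
          simpa [mul_comm] using sum_measureReal_isDirectedCycle_le hindep hq hentry ℓ
  exact ⟨hbound, fun hqN => hbound.trans (geom_sum_Icc_one_le_two_mul (by positivity) hqN N)⟩

/-- Let `X` be an `N × N` random matrix with independent entries with
`P(X_{i,j} ≠ 0) ≤ q` for all `i, j`, where `0 ≤ q` and `qN < 1`. Then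
`P(ρ(X) > 0) ≤ Σ_{ℓ=1}^N (qN)^ℓ`; in particular, if `qN ≤ 1/2` then
`P(ρ(X) > 0) ≤ 2qN`. -/
theorem sparse_matrix_spectral_radius_zero
    {Ω : Type*} [MeasurableSpace Ω] (P : Measure Ω) [IsProbabilityMeasure P]
    {N : ℕ} (X : Fin N → Fin N → Ω → ℂ) (hXm : ∀ i j, Measurable (X i j))
    (hindep : iIndepFun
      (fun p : Fin N × Fin N => X p.1 p.2) P)
    (q : ℝ) (hq : 0 ≤ q) (hqN : q * N < 1)
    (hentry : ∀ i j, (P {ω | X i j ω ≠ 0}).toReal ≤ q) :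
    (P {ω | 0 < specRad (Matrix.of fun i j => X i j ω)}).toReal ≤
      ∑ ℓ ∈ Finset.Icc 1 N, (q * N) ^ ℓ ∧
    (q * N ≤ 1 / 2 →
      (P {ω | 0 < specRad (Matrix.of fun i j => X i j ω)}).toReal ≤ 2 * (q * N)) :=
  sparse_matrix_spectral_radius_zero_general P X hindep q hq hentry
end

section
/- For integers 1 ≤ ℓ ≤ min{k, N}, let 𝒩(k,ℓ) denote the number of even closed paths of length 2k on [N] that visit exactly ℓ distinct vertices. Then 𝒩(k,ℓ) ≤ k²·(4k)^{6(k−ℓ)}·N^ℓ. -/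
/-!
Follow an even closed walk `w 0, …, w (2k)` step by step, keeping track of the directed edges
traversed an odd number of times so far, the *open* edges. A step is *opening* if it opens its
edge. Evenness forces exactly `k` opening steps. The `ℓ - 1` steps to a new vertex are opening,
and every vertex is left for the first time by an opening step from a vertex without open
out-edges, so at most `k - ℓ` opening steps start at a vertex with an open out-edge. A potential
argument shows that there are as many closing steps from a vertex with at least two open
out-edges. Calling these two kinds of steps and the openings to an old vertex *special*, there
are at most `3 (k - ℓ) + 1` special steps.

Every other step is forced: to the next new vertex, or along the unique open out-edge. So the walk
is determined by its vertices in order of first visit (`N ^ ℓ` choices) and, for each special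
step, its time and the index of its target in that list. The first special step happens before
time `ℓ`, so it costs only `k²`; the others cost at most `2k² + 1 ≤ (4k)²` each.
-/

open Finset Nat

theorem Nat.count_eq_sum_ite (p : ℕ → Prop) [DecidablePred p] (n : ℕ) :
    count p n = ∑ t ∈ range n, if p t then 1 else 0 := by
  rw [count_eq_card_filter_range, card_filter]

theorem Nat.count_add_count_not (p : ℕ → Prop) [DecidablePred p] (n : ℕ) :
    count p n + count (fun t => ¬p t) n = n := by
  induction n with
  | zero => simp
  | succ n ih => rw [count_succ, count_succ]; split_ifs <;> omega

theorem Nat.count_telescope (p q : ℕ → Prop) [DecidablePred p] [DecidablePred q] (f : ℕ → ℕ)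
    (h : ∀ t, f (t + 1) + (if p t then 1 else 0) = f t + if q t then 1 else 0) (n : ℕ) :
    f n + count p n = f 0 + count q n := by
  induction n with
  | zero => simp
  | succ n ih => have := h n; rw [count_succ, count_succ]; omega

theorem List.length_filter_range (p : ℕ → Prop) [DecidablePred p] (n : ℕ) :
    ((List.range n).filter (p ·)).length = Nat.count p n := by
  induction n with
  | zero => simp
  | succ n ih =>
    rw [List.range_succ, List.filter_append, List.length_append, ih, count_succ]
    by_cases h : p n <;> simp [h]

theorem List.eq_of_forall_fin_getElem?_eq {β : Type*} {l₁ l₂ : List β} {n : ℕ}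
    (h₁ : l₁.length ≤ n) (h₂ : l₂.length ≤ n) (h : ∀ i : Fin n, l₁[(i : ℕ)]? = l₂[(i : ℕ)]?) :
    l₁ = l₂ :=
  List.ext_getElem? fun i => if hi : i < n then h ⟨i, hi⟩ else by
    rw [List.getElem?_eq_none (by omega), List.getElem?_eq_none (by omega)]

theorem List.eq_of_forall_fin_getD_eq {β : Type*} {l₁ l₂ : List β} {n : ℕ} {d₁ d₂ : β}
    (h₁ : l₁.length = n) (h₂ : l₂.length = n) (h : ∀ i : Fin n, l₁.getD i d₁ = l₂.getD i d₂) :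
    l₁ = l₂ :=
  List.ext_getElem (h₁.trans h₂.symm) fun i hi₁ hi₂ => by
    simpa [List.getD_eq_getElem, hi₁, hi₂] using h ⟨i, h₁ ▸ hi₁⟩

namespace EvenClosedWalk

variable {α : Type*}

section

variable [DecidableEq α] (w : ℕ → α)

def edgeCount (t : ℕ) (e : α × α) : ℕ := count (fun s => (w s, w (s + 1)) = e) t

def IsOpening (t : ℕ) : Prop := Even (edgeCount w t (w t, w (t + 1)))

def IsFirstVisit (t : ℕ) : Prop := ∀ s < t, w s ≠ w t

instance : DecidablePred (IsOpening w) := fun _ => inferInstanceAs (Decidable (Even _))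

instance : DecidablePred (IsFirstVisit w) := fun _ => inferInstanceAs (Decidable (∀ _ < _, _))

theorem edgeCount_succ (t : ℕ) (e : α × α) :
    edgeCount w (t + 1) e = edgeCount w t e + if (w t, w (t + 1)) = e then 1 else 0 :=
  count_succ _ _

theorem edgeCount_congr {w' : ℕ → α} {t : ℕ} (h : ∀ s ≤ t, w s = w' s) :
    edgeCount w t = edgeCount w' t := by
  ext e
  simp only [edgeCount, count_eq_card_filter_range]
  refine congrArg _ (filter_congr fun s hs => ?_)
  rw [mem_range] at hs
  rw [h s hs.le, h (s + 1) hs]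

theorem edgeCount_eq_zero_of_isFirstVisit {t : ℕ} (h : IsFirstVisit w t) (x : α) :
    edgeCount w t (w t, x) = 0 :=
  count_iff_forall_not.2 fun s hs he => h s hs (congrArg Prod.fst he)

theorem isOpening_of_isFirstVisit {t : ℕ} (h : IsFirstVisit w t) : IsOpening w t := by
  simp [IsOpening, edgeCount_eq_zero_of_isFirstVisit w h]

theorem isOpening_of_isFirstVisit_succ {t : ℕ} (h : IsFirstVisit w (t + 1)) : IsOpening w t := by
  have : edgeCount w t (w t, w (t + 1)) = 0 :=
    count_iff_forall_not.2 fun s hs he => h (s + 1) (by omega) (congrArg Prod.snd he)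
  simp [IsOpening, this]

def firstVisits : ℕ → List α
  | 0 => [w 0]
  | t + 1 => if w (t + 1) ∈ firstVisits t then firstVisits t else firstVisits t ++ [w (t + 1)]

theorem mem_firstVisits {t : ℕ} {x : α} : x ∈ firstVisits w t ↔ ∃ s ≤ t, w s = x := by
  induction t with
  | zero => simp [firstVisits, eq_comm]
  | succ t ih =>
    simp only [firstVisits]
    split_ifs with h
    · refine ih.trans ⟨fun ⟨s, hs, hx⟩ => ⟨s, by omega, hx⟩, fun ⟨s, hs, hx⟩ => ?_⟩
      rcases Nat.lt_or_eq_of_le hs with hs | rfl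
      · exact ⟨s, by omega, hx⟩
      · exact ih.1 (hx ▸ h)
    · simp only [List.mem_append, List.mem_singleton, ih, Nat.le_succ_iff]
      grind

theorem isFirstVisit_succ_iff {t : ℕ} : IsFirstVisit w (t + 1) ↔ w (t + 1) ∉ firstVisits w t := by
  simp [IsFirstVisit, mem_firstVisits]

theorem firstVisits_succ_of_isFirstVisit {t : ℕ} (h : IsFirstVisit w (t + 1)) :
    firstVisits w (t + 1) = firstVisits w t ++ [w (t + 1)] :=
  if_neg ((isFirstVisit_succ_iff w).1 h)

theorem firstVisits_succ_of_not_isFirstVisit {t : ℕ} (h : ¬IsFirstVisit w (t + 1)) :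
    firstVisits w (t + 1) = firstVisits w t :=
  if_pos (not_not.1 (mt (isFirstVisit_succ_iff w).2 h))

theorem length_firstVisits (t : ℕ) : (firstVisits w t).length = count (IsFirstVisit w) (t + 1) := by
  induction t with
  | zero => simp [firstVisits, count_succ, IsFirstVisit]
  | succ t ih =>
    rw [count_succ, ← ih]
    by_cases h : IsFirstVisit w (t + 1)
    · simp [firstVisits_succ_of_isFirstVisit w h, h]
    · simp [firstVisits_succ_of_not_isFirstVisit w h, h]

theorem nodup_firstVisits (t : ℕ) : (firstVisits w t).Nodup := by
  induction t with
  | zero => simp [firstVisits]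
  | succ t ih =>
    by_cases h : IsFirstVisit w (t + 1)
    · rw [firstVisits_succ_of_isFirstVisit w h, List.nodup_append]
      refine ⟨ih, List.nodup_singleton _, fun a ha b hb hab => ?_⟩
      rw [List.mem_singleton] at hb
      exact (isFirstVisit_succ_iff w).1 h (hb ▸ hab ▸ ha)
    · rwa [firstVisits_succ_of_not_isFirstVisit w h]

theorem firstVisits_prefix {s t : ℕ} (h : s ≤ t) : firstVisits w s <+: firstVisits w t := by
  induction t, h using Nat.le_induction with
  | base => exact List.prefix_refl _
  | succ t _ ih =>
    refine ih.trans ?_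
    by_cases h : IsFirstVisit w (t + 1)
    · exact firstVisits_succ_of_isFirstVisit w h ▸ List.prefix_append _ _
    · exact firstVisits_succ_of_not_isFirstVisit w h ▸ List.prefix_refl _

theorem firstVisits_congr {w' : ℕ → α} {t : ℕ} (h : ∀ s ≤ t, w s = w' s) :
    firstVisits w t = firstVisits w' t := by
  induction t with
  | zero => simp [firstVisits, h 0 le_rfl]
  | succ t ih => simp only [firstVisits, ih fun s hs => h s (by omega), h (t + 1) le_rfl]

theorem getElem?_firstVisits_zero (K : ℕ) : (firstVisits w K)[0]? = some (w 0) :=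
  List.prefix_iff_getElem?.1 (firstVisits_prefix w K.zero_le) 0 (by simp [firstVisits])

theorem getElem?_firstVisits_of_isFirstVisit {t K : ℕ} (h : IsFirstVisit w (t + 1))
    (hK : t + 1 ≤ K) : (firstVisits w K)[(firstVisits w t).length]? = some (w (t + 1)) := by
  have := List.prefix_iff_getElem?.1 (firstVisits_prefix w hK) (firstVisits w t).length
  simp_all [firstVisits_succ_of_isFirstVisit w h]

section OpenNeighbors

variable [Fintype α]

def openNeighbors (t : ℕ) (u : α) : Finset α := univ.filter fun x => Odd (edgeCount w t (u, x))

def openDegree (t : ℕ) : ℕ := #(openNeighbors w t (w t))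

theorem mem_openNeighbors {t : ℕ} {u x : α} :
    x ∈ openNeighbors w t u ↔ Odd (edgeCount w t (u, x)) := by
  simp [openNeighbors]

theorem openNeighbors_congr {w' : ℕ → α} {t : ℕ} (h : ∀ s ≤ t, w s = w' s) (u : α) :
    openNeighbors w t u = openNeighbors w' t u := by
  simp only [openNeighbors, edgeCount_congr w h]

theorem openNeighbors_zero (u : α) : openNeighbors w 0 u = ∅ := by
  ext x
  simp [mem_openNeighbors, edgeCount]

theorem openNeighbors_eq_empty_of_even {K : ℕ} (hE : ∀ e, Even (edgeCount w K e)) (u : α) :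
    openNeighbors w K u = ∅ := by
  ext x
  simp [mem_openNeighbors, hE]

theorem openDegree_eq_zero_of_isFirstVisit {t : ℕ} (h : IsFirstVisit w t) : openDegree w t = 0 := by
  simp [openDegree, Finset.card_eq_zero, Finset.eq_empty_iff_forall_notMem, mem_openNeighbors,
    edgeCount_eq_zero_of_isFirstVisit w h]

theorem mem_openNeighbors_of_not_isOpening {t : ℕ} (h : ¬IsOpening w t) :
    w (t + 1) ∈ openNeighbors w t (w t) :=
  (mem_openNeighbors w).2 (Nat.not_even_iff_odd.1 h)

theorem openNeighbors_succ_of_ne {t : ℕ} {u : α} (hu : u ≠ w t) :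
    openNeighbors w (t + 1) u = openNeighbors w t u := by
  ext x
  have : (w t, w (t + 1)) ≠ (u, x) := fun he => hu (congrArg Prod.fst he).symm
  simp [mem_openNeighbors, edgeCount_succ, this]

theorem openNeighbors_succ_self_of_isOpening {t : ℕ} (h : IsOpening w t) :
    openNeighbors w (t + 1) (w t) = insert (w (t + 1)) (openNeighbors w t (w t)) := by
  ext x
  by_cases hx : x = w (t + 1)
  · subst hx; simpa [mem_openNeighbors, edgeCount_succ, Nat.odd_add_one, IsOpening] using h
  · have : (w t, w (t + 1)) ≠ (w t, x) := fun he => hx (congrArg Prod.snd he).symm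
    simp [mem_openNeighbors, edgeCount_succ, this, hx]

theorem openNeighbors_succ_self_of_not_isOpening {t : ℕ} (h : ¬IsOpening w t) :
    openNeighbors w (t + 1) (w t) = (openNeighbors w t (w t)).erase (w (t + 1)) := by
  ext x
  by_cases hx : x = w (t + 1)
  · subst hx; simpa [mem_openNeighbors, edgeCount_succ, Nat.odd_add_one, IsOpening] using h
  · have : (w t, w (t + 1)) ≠ (w t, x) := fun he => hx (congrArg Prod.snd he).symm
    simp [mem_openNeighbors, edgeCount_succ, this, hx]

theorem card_openNeighbors_succ_self_of_isOpening {t : ℕ} (h : IsOpening w t) :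
    #(openNeighbors w (t + 1) (w t)) = openDegree w t + 1 := by
  rw [openNeighbors_succ_self_of_isOpening w h, card_insert_of_notMem, openDegree]
  simpa [mem_openNeighbors, IsOpening] using h

theorem card_openNeighbors_succ_self_of_not_isOpening {t : ℕ} (h : ¬IsOpening w t) :
    #(openNeighbors w (t + 1) (w t)) + 1 = openDegree w t := by
  rw [openNeighbors_succ_self_of_not_isOpening w h,
    card_erase_add_one (mem_openNeighbors_of_not_isOpening w h), openDegree]

/-- Only the open neighbourhood of the current vertex changes in a step. -/
theorem sum_card_openNeighbors_succ (g : ℕ → ℕ) (t : ℕ) :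
    ∑ u, g #(openNeighbors w (t + 1) u) + g (openDegree w t) =
      ∑ u, g #(openNeighbors w t u) + g #(openNeighbors w (t + 1) (w t)) := by
  rw [← sum_erase_add _ _ (mem_univ (w t)), ← sum_erase_add _ _ (mem_univ (w t)), openDegree,
    sum_congr rfl fun u hu => by rw [openNeighbors_succ_of_ne w (ne_of_mem_erase hu)]]
  ring

theorem two_mul_count_isOpening {K : ℕ} (hE : ∀ e, Even (edgeCount w K e)) :
    2 * count (IsOpening w) K = K := by
  have h := count_telescope (fun t => ¬IsOpening w t) (IsOpening w)
    (fun t => ∑ u, #(openNeighbors w t u)) (fun t => by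
      have := sum_card_openNeighbors_succ w id t
      by_cases ht : IsOpening w t
      · have := card_openNeighbors_succ_self_of_isOpening w ht
        simp only [id, ht, not_true_eq_false, if_true, if_false] at *; omega
      · have := card_openNeighbors_succ_self_of_not_isOpening w ht
        simp only [id, ht, not_false_eq_true, if_true, if_false] at *; omega) K
  simp only [openNeighbors_zero, openNeighbors_eq_empty_of_even w hE, card_empty,
    sum_const_zero] at h
  have := count_add_count_not (IsOpening w) K
  omega

/-- A potential argument for the surplus `∑ u, (#(openNeighbors w t u) - 1)`, which vanishes at both
ends of an even walk. -/
theorem count_isOpening_openDegree_pos {K : ℕ} (hE : ∀ e, Even (edgeCount w K e)) :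
    count (fun t => IsOpening w t ∧ 1 ≤ openDegree w t) K =
      count (fun t => ¬IsOpening w t ∧ 2 ≤ openDegree w t) K := by
  have h := count_telescope (fun t => ¬IsOpening w t ∧ 2 ≤ openDegree w t)
    (fun t => IsOpening w t ∧ 1 ≤ openDegree w t)
    (fun t => ∑ u, (#(openNeighbors w t u) - 1)) (fun t => by
      have := sum_card_openNeighbors_succ w (· - 1) t
      by_cases ht : IsOpening w t
      · have := card_openNeighbors_succ_self_of_isOpening w ht
        simp only [ht, not_true_eq_false, true_and, false_and, if_false] at *; split_ifs <;> omega
      · have := card_openNeighbors_succ_self_of_not_isOpening w ht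
        simp only [ht, not_false_eq_true, true_and, false_and, if_false] at *
        split_ifs <;> omega) K
  simp only [openNeighbors_zero, openNeighbors_eq_empty_of_even w hE, card_empty] at h
  omega

def IsSpecial (t : ℕ) : Prop :=
  IsOpening w t ∧ ¬IsFirstVisit w (t + 1) ∨ IsOpening w t ∧ 1 ≤ openDegree w t ∨
    ¬IsOpening w t ∧ 2 ≤ openDegree w t

instance : DecidablePred (IsSpecial w) := fun _ => inferInstanceAs (Decidable (_ ∨ _ ∨ _))

theorem isFirstVisit_of_forall_not_isSpecial {t : ℕ} (h : ∀ s < t, ¬IsSpecial w s) :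
    IsFirstVisit w t := by
  induction t with
  | zero => exact fun s hs => absurd hs s.not_lt_zero
  | succ t ih =>
    have hfirst := ih fun s hs => h s (by omega)
    by_contra hnot
    exact h t (by omega) (Or.inl ⟨isOpening_of_isFirstVisit w hfirst, hnot⟩)

theorem not_isSpecial_cases {t : ℕ} (h : ¬IsSpecial w t) :
    openDegree w t = 0 ∧ IsFirstVisit w (t + 1) ∨ openNeighbors w t (w t) = {w (t + 1)} := by
  simp only [IsSpecial, not_or, not_and, not_le] at h
  obtain ⟨hfresh, hdegree, hclosing⟩ := h
  by_cases ht : IsOpening w t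
  · exact Or.inl ⟨by have := hdegree ht; omega, not_not.1 (hfresh ht)⟩
  · refine Or.inr (eq_singleton_iff_unique_mem.2 ⟨mem_openNeighbors_of_not_isOpening w ht, ?_⟩)
    exact fun x hx => card_le_one.1 (by have := hclosing ht; rw [openDegree] at this; omega) x hx _
      (mem_openNeighbors_of_not_isOpening w ht)

theorem count_isOpening_eq (K : ℕ) :
    count (IsOpening w) K = count (fun t => IsOpening w t ∧ 1 ≤ openDegree w t) K +
      count (fun t => IsOpening w t ∧ openDegree w t = 0) K := by
  simp only [count_eq_sum_ite, ← sum_add_distrib]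
  refine sum_congr rfl fun t _ => ?_
  by_cases h : IsOpening w t
  · simp only [h, true_and, if_true]; split_ifs <;> omega
  · simp only [h, false_and, if_false]

/-- Pointwise, since an opening step to a new vertex from a vertex without open out-edges is not
special. -/
theorem count_isSpecial_add_le_count (K : ℕ) :
    count (IsSpecial w) K + count (fun t => IsFirstVisit w (t + 1)) K +
        count (fun t => IsOpening w t ∧ openDegree w t = 0) K ≤
      2 * count (IsOpening w) K + count (fun t => ¬IsOpening w t ∧ 2 ≤ openDegree w t) K := by
  simp only [count_eq_sum_ite, mul_sum, ← sum_add_distrib]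
  refine sum_le_sum fun t _ => ?_
  by_cases h₂ : IsFirstVisit w (t + 1)
  · have h₁ := isOpening_of_isFirstVisit_succ w h₂
    simp [IsSpecial, h₁, h₂]; split_ifs <;> omega
  · by_cases h₁ : IsOpening w t
    · simp [IsSpecial, h₁, h₂]; split_ifs <;> omega
    · simp [IsSpecial, h₁, h₂]

theorem count_isSpecial_add_le {k : ℕ} (hk : 0 < k) (hE : ∀ e, Even (edgeCount w (2 * k) e))
    (hclosed : w (2 * k) = w 0) :
    count (IsSpecial w) (2 * k) + 3 * (firstVisits w (2 * k)).length ≤ 3 * k + 1 := by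
  have hlength := length_firstVisits w (2 * k)
  have hclosed' : count (IsFirstVisit w) (2 * k + 1) = count (IsFirstVisit w) (2 * k) := by
    rw [count_succ, if_neg fun h => h 0 (by omega) hclosed.symm, add_zero]
  have hfresh : count (IsFirstVisit w) (2 * k + 1) =
      count (fun t => IsFirstVisit w (t + 1)) (2 * k) + 1 := by
    simp [count_succ', IsFirstVisit]
  have hfirst_le : count (IsFirstVisit w) (2 * k) ≤
      count (fun t => IsOpening w t ∧ openDegree w t = 0) (2 * k) :=
    count_mono_left fun t _ ht =>
      ⟨isOpening_of_isFirstVisit w ht, openDegree_eq_zero_of_isFirstVisit w ht⟩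
  have := two_mul_count_isOpening w hE
  have := count_isOpening_openDegree_pos w hE
  have := count_isOpening_eq w (2 * k)
  have := count_isSpecial_add_le_count w (2 * k)
  omega

def specialCodes (K : ℕ) : List (ℕ × ℕ) :=
  ((List.range K).filter (IsSpecial w ·)).map fun t => (t, (firstVisits w K).idxOf (w (t + 1)))

theorem mem_specialCodes {K t c : ℕ} :
    (t, c) ∈ specialCodes w K ↔
      t < K ∧ IsSpecial w t ∧ (firstVisits w K).idxOf (w (t + 1)) = c := by
  simp [specialCodes, and_assoc]

theorem isSpecial_iff_exists_mem_specialCodes {K t : ℕ} (ht : t < K) :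
    IsSpecial w t ↔ ∃ c, (t, c) ∈ specialCodes w K := by
  simp [mem_specialCodes, ht]

theorem length_specialCodes (K : ℕ) : (specialCodes w K).length = count (IsSpecial w) K := by
  simp [specialCodes, List.length_filter_range]

theorem lt_of_mem_specialCodes {K : ℕ} {x : ℕ × ℕ} (hx : x ∈ specialCodes w K) :
    x.1 < K ∧ x.2 < (firstVisits w K).length := by
  obtain ⟨ht, -, hc⟩ := (mem_specialCodes w).1 hx
  exact ⟨ht, hc ▸ List.idxOf_lt_length_of_mem ((mem_firstVisits w).2 ⟨x.1 + 1, ht, rfl⟩)⟩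

/-- The steps before the first special step visit distinct vertices. -/
theorem lt_length_firstVisits_of_specialCodes_eq_cons {K t c : ℕ} {l : List (ℕ × ℕ)}
    (h : specialCodes w K = (t, c) :: l) : t < (firstVisits w K).length := by
  have hsorted : (specialCodes w K).Pairwise (·.1 < ·.1) :=
    List.pairwise_map.2 (List.pairwise_lt_range.filter _)
  rw [h, List.pairwise_cons] at hsorted
  have htK := (lt_of_mem_specialCodes w (h ▸ List.mem_cons_self)).1
  have hfirst : ∀ s < t + 1, IsFirstVisit w s := fun s hs =>
    isFirstVisit_of_forall_not_isSpecial w fun r hr hspecial => by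
      obtain ⟨c', hc'⟩ := (isSpecial_iff_exists_mem_specialCodes w (K := K) (by omega)).1 hspecial
      rcases List.mem_cons.1 (h ▸ hc') with he | hl
      · simp only [Prod.mk.injEq] at he; omega
      · have := hsorted.1 _ hl; omega
  have := (firstVisits_prefix w htK.le).length_le
  rw [length_firstVisits, count_iff_forall.2 hfirst] at this
  omega

theorem specialCodes_ne_nil {k : ℕ} (hk : 0 < k) (hE : ∀ e, Even (edgeCount w (2 * k) e))
    (hclosed : w (2 * k) = w 0) : specialCodes w (2 * k) ≠ [] := by
  intro hnil
  have hfirst : ∀ s < 2 * k + 1, IsFirstVisit w s := fun s _ =>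
    isFirstVisit_of_forall_not_isSpecial w fun r _ hr => by
      obtain ⟨c, hc⟩ := (isSpecial_iff_exists_mem_specialCodes w (K := 2 * k) (by omega)).1 hr
      simp [hnil] at hc
  have := count_isSpecial_add_le w hk hE hclosed
  rw [length_firstVisits, count_iff_forall.2 hfirst] at this
  omega

variable {w}

theorem succ_eq_of_specialCodes_eq {w' : ℕ → α} {K t : ℕ} (ht : t < K)
    (hpre : ∀ s ≤ t, w s = w' s) (hcodes : specialCodes w K = specialCodes w' K)
    (hfirst : firstVisits w K = firstVisits w' K) : w (t + 1) = w' (t + 1) := by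
  have hstate : firstVisits w t = firstVisits w' t := firstVisits_congr w hpre
  have hnbrs : openNeighbors w t (w t) = openNeighbors w' t (w' t) := by
    rw [openNeighbors_congr w hpre, hpre t le_rfl]
  have hspecial : IsSpecial w t ↔ IsSpecial w' t := by
    rw [isSpecial_iff_exists_mem_specialCodes w ht, isSpecial_iff_exists_mem_specialCodes w' ht,
      hcodes]
  by_cases hs : IsSpecial w t
  · obtain ⟨-, -, hc⟩ := (mem_specialCodes w').1 (hcodes ▸ (mem_specialCodes w).2 ⟨ht, hs, rfl⟩)
    have hread := fun v : ℕ → α =>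
      List.getElem?_idxOf ((mem_firstVisits v (x := v (t + 1))).2 ⟨t + 1, ht, rfl⟩)
    have := hread w
    rw [← hc, hfirst, hread w'] at this
    exact (Option.some_injective _ this).symm
  · rcases not_isSpecial_cases w hs with ⟨hl, hf⟩ | h <;>
      rcases not_isSpecial_cases w' (hspecial.not.1 hs) with ⟨hl', hf'⟩ | h'
    · have e := getElem?_firstVisits_of_isFirstVisit w hf ht
      rw [hstate, hfirst, getElem?_firstVisits_of_isFirstVisit w' hf' ht] at e
      exact (Option.some_injective _ e).symm
    · simp [openDegree, hnbrs, h'] at hl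
    · simp [openDegree, ← hnbrs, h] at hl'
    · exact singleton_injective (h.symm.trans (hnbrs.trans h'))

theorem eq_of_specialCodes_eq {w' : ℕ → α} {K : ℕ} (hcodes : specialCodes w K = specialCodes w' K)
    (hfirst : firstVisits w K = firstVisits w' K) {t : ℕ} (ht : t ≤ K) : w t = w' t := by
  induction t using Nat.strong_induction_on with
  | _ t ih =>
    rcases t with _ | t
    · have := getElem?_firstVisits_zero w K
      rw [hfirst, getElem?_firstVisits_zero w' K] at this
      exact (Option.some_injective _ this).symm
    · exact succ_eq_of_specialCodes_eq ht (fun s hs => ih s (by omega) (by omega)) hcodes hfirst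

end OpenNeighbors

end

def codeSpace (α : Type*) [Fintype α] (k ℓ : ℕ) :
    Finset ((ℕ × ℕ) × (Fin (3 * (k - ℓ)) → Option (ℕ × ℕ)) × (Fin ℓ → α)) :=
  (range k ×ˢ range k) ×ˢ Fintype.piFinset (fun _ => (range (2 * k) ×ˢ range k).insertNone) ×ˢ univ

theorem card_codeSpace [Fintype α] (k ℓ : ℕ) :
    #(codeSpace α k ℓ) = k * k * (2 * k * k + 1) ^ (3 * (k - ℓ)) * Fintype.card α ^ ℓ := by
  simp [codeSpace, card_product]
  ring

section

variable [DecidableEq α] [Fintype α]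

/-- The first special step is encoded separately, in `range k ×ˢ range k`: it happens before
time `ℓ ≤ k`. -/
def encode (w : ℕ → α) (k ℓ : ℕ) : (ℕ × ℕ) × (Fin (3 * (k - ℓ)) → Option (ℕ × ℕ)) × (Fin ℓ → α) :=
  ((specialCodes w (2 * k)).headD (0, 0), fun i => (specialCodes w (2 * k)).tail[(i : ℕ)]?,
    fun i => (firstVisits w (2 * k)).getD i (w 0))

structure IsEvenClosedWalk (w : ℕ → α) (k ℓ : ℕ) : Prop where
  even : ∀ e, Even (edgeCount w (2 * k) e)
  closed : w (2 * k) = w 0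
  length_firstVisits : (firstVisits w (2 * k)).length = ℓ

theorem encode_mem_codeSpace {w : ℕ → α} {k ℓ : ℕ} (hk : 0 < k) (hw : IsEvenClosedWalk w k ℓ) :
    encode w k ℓ ∈ codeSpace α k ℓ := by
  have hcount := count_isSpecial_add_le w hk hw.even hw.closed
  obtain ⟨⟨t, c⟩, l, hcons⟩ :=
    List.exists_cons_of_ne_nil (specialCodes_ne_nil w hk hw.even hw.closed)
  have hlen := length_specialCodes w (2 * k)
  have hhead := lt_length_firstVisits_of_specialCodes_eq_cons w hcons
  have hbound : ∀ x ∈ (t, c) :: l, x.1 < 2 * k ∧ x.2 < ℓ := fun x hx => by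
    rw [← hcons, ← hw.length_firstVisits] at *
    exact lt_of_mem_specialCodes w hx
  rw [hcons, List.length_cons] at hlen
  rw [hw.length_firstVisits] at hhead hcount
  simp only [encode, codeSpace, hcons, List.headD_cons, List.tail_cons, mem_product, mem_range,
    Fintype.mem_piFinset, mem_insertNone, mem_univ, and_true]
  refine ⟨⟨by omega, by have := hbound _ List.mem_cons_self; omega⟩, fun i x hx => ?_⟩
  have := hbound x (List.mem_cons_of_mem _ (List.mem_of_getElem? hx))
  omega

theorem eq_of_encode_eq {w w' : ℕ → α} {k ℓ : ℕ} (hk : 0 < k) (hw : IsEvenClosedWalk w k ℓ)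
    (hw' : IsEvenClosedWalk w' k ℓ) (h : encode w k ℓ = encode w' k ℓ) {t : ℕ} (ht : t ≤ 2 * k) :
    w t = w' t := by
  simp only [encode, Prod.mk.injEq, funext_iff] at h
  obtain ⟨hhead, htail, hfirst⟩ := h
  have hcount := count_isSpecial_add_le w hk hw.even hw.closed
  have hcount' := count_isSpecial_add_le w' hk hw'.even hw'.closed
  rw [← length_specialCodes, hw.length_firstVisits] at hcount
  rw [← length_specialCodes, hw'.length_firstVisits] at hcount'
  have hcodes : specialCodes w (2 * k) = specialCodes w' (2 * k) := by
    obtain ⟨x, l, hl⟩ := List.exists_cons_of_ne_nil (specialCodes_ne_nil w hk hw.even hw.closed)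
    obtain ⟨x', l', hl'⟩ :=
      List.exists_cons_of_ne_nil (specialCodes_ne_nil w' hk hw'.even hw'.closed)
    simp only [hl, hl', List.length_cons] at hcount hcount'
    simp only [hl, hl', List.headD_cons, List.tail_cons] at hhead htail ⊢
    rw [hhead, List.eq_of_forall_fin_getElem?_eq (by omega) (by omega) htail]
  exact eq_of_specialCodes_eq hcodes
    (List.eq_of_forall_fin_getD_eq hw.length_firstVisits hw'.length_firstVisits hfirst) ht

end

theorem count_pathEdges {N : ℕ} (P : List (Fin N)) (d : Fin N) (e : Fin N × Fin N) :
    (pathEdges P).count e = edgeCount (fun i => P.getD i d) (P.length - 1) e := by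
  induction P with
  | nil => simp [pathEdges, edgeCount]
  | cons a P ih =>
    rcases P with _ | ⟨b, P⟩
    · simp [pathEdges, edgeCount]
    · simp only [pathEdges, List.tail_cons, List.zip_cons_cons, ← Multiset.cons_coe,
        Multiset.count_cons] at ih ⊢
      simp [ih, edgeCount, count_succ', eq_comm]

theorem getD_length_sub_one_of_isClosedPath {N : ℕ} {P : List (Fin N)} (hP : IsClosedPath P)
    (d : Fin N) : P.getD (P.length - 1) d = P.getD 0 d := by
  obtain ⟨-, h⟩ := hP
  rw [List.head?_eq_getElem?, List.getLast?_eq_getElem?] at h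
  simp [List.getD_eq_getElem?_getD, h]

theorem length_firstVisits_getD [DecidableEq α] {P : List α} (hP : P ≠ []) (d : α) :
    (firstVisits (fun i => P.getD i d) (P.length - 1)).length = P.toFinset.card := by
  rw [← List.toFinset_card_of_nodup (nodup_firstVisits _ _)]
  congr 1
  ext x
  simp only [List.mem_toFinset]
  rw [mem_firstVisits, List.mem_iff_getElem]
  have := List.length_pos_iff.2 hP
  constructor
  · rintro ⟨s, hs, rfl⟩
    exact ⟨s, by omega, (List.getD_eq_getElem _ _ _).symm⟩
  · rintro ⟨s, hs, rfl⟩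
    exact ⟨s, by omega, List.getD_eq_getElem _ _ _⟩

theorem isEvenClosedWalk_getD {N k ℓ : ℕ} {P : List (Fin N)} (hlen : P.length = 2 * k + 1)
    (hP : IsEvenPath P) (hcard : P.toFinset.card = ℓ) (d : Fin N) :
    IsEvenClosedWalk (fun i => P.getD i d) k ℓ := by
  have h2k : 2 * k = P.length - 1 := by omega
  refine ⟨fun e => ?_, ?_, ?_⟩ <;> rw [h2k]
  · exact count_pathEdges P d e ▸ hP.2 e
  · exact getD_length_sub_one_of_isClosedPath hP.1 d
  · exact hcard ▸ length_firstVisits_getD hP.1.1 d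

end EvenClosedWalk

open EvenClosedWalk

/-- For `1 ≤ ℓ ≤ min{k, N}`, the number of even closed paths of length `2k` on `[N]`
visiting exactly `ℓ` distinct vertices is at most `k²·(4k)^{6(k-ℓ)}·N^ℓ`. -/
theorem count_even_closed_paths (N k ℓ : ℕ) (h1 : 1 ≤ ℓ) (hlk : ℓ ≤ k) (hlN : ℓ ≤ N) :
    {P : List (Fin N) | P.length = 2 * k + 1 ∧ IsEvenPath P ∧ P.toFinset.card = ℓ}.ncard
      ≤ k ^ 2 * (4 * k) ^ (6 * (k - ℓ)) * N ^ ℓ := by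
  have hk : 0 < k := by omega
  let d : Fin N := ⟨0, by omega⟩
  calc _ ≤ (codeSpace (Fin N) k ℓ : Set _).ncard :=
        Set.ncard_le_ncard_of_injOn (fun P => encode (fun i => P.getD i d) k ℓ)
          (fun P hP => encode_mem_codeSpace hk (isEvenClosedWalk_getD hP.1 hP.2.1 hP.2.2 d))
          (fun P hP Q hQ h => List.eq_of_forall_fin_getD_eq hP.1 hQ.1 fun i =>
            eq_of_encode_eq hk (isEvenClosedWalk_getD hP.1 hP.2.1 hP.2.2 d)
              (isEvenClosedWalk_getD hQ.1 hQ.2.1 hQ.2.2 d) h (by omega))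
    _ = k ^ 2 * (2 * k * k + 1) ^ (3 * (k - ℓ)) * N ^ ℓ := by
        rw [Set.ncard_coe_finset, card_codeSpace, Fintype.card_fin, sq]
    _ ≤ k ^ 2 * ((4 * k) ^ 2) ^ (3 * (k - ℓ)) * N ^ ℓ := by gcongr; nlinarith
    _ = k ^ 2 * (4 * k) ^ (6 * (k - ℓ)) * N ^ ℓ := by rw [← pow_mul]; ring_nf
end

section
/- Let α, β > 0 with αβ > 1, and let X be an N×N random matrix with independent entries satisfying P(|X_{i,j}| > N^β) ≤ N^{−αβ} for all i,j. If N^{αβ−1} ≥ 2, then the probability that the digraph on [N] with edge set {(i,j) : |X_{i,j}| > N^β} contains a directed cycle is at most 2·N^{1−αβ}. -/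
/-!
A directed cycle of length `m` visits `m` distinct vertices, so it is determined by an injective
map `f : Fin m → [N]`, and its `m` edges `(f ℓ, f (ℓ + 1))` are distinct entries of `X`. By
independence, all of them are heavy with probability at most `(N ^ (-αβ)) ^ m`, and there are at
most `N ^ m` such maps. The union bound over `1 ≤ m ≤ N` gives at most `∑ r ^ m` with
`r = N ^ (1 - αβ) ≤ 1 / 2`, and this geometric sum is at most `2 r`.
-/

open MeasureTheory ProbabilityTheory Finset

theorem sum_range_pow_succ_le_two_mul {r : ℝ} (hr0 : 0 ≤ r) (hr : r ≤ 1 / 2) (n : ℕ) :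
    ∑ k ∈ range n, r ^ (k + 1) ≤ 2 * r := by
  induction n with
  | zero => simpa using hr0
  | succ n ih =>
    have hsplit :
        ∑ k ∈ range (n + 1), r ^ (k + 1) = r * ∑ k ∈ range n, r ^ (k + 1) + r := by
      rw [sum_range_succ', mul_sum]
      simp only [pow_succ' r (_ + 1), zero_add, pow_one]
    rw [hsplit]
    nlinarith

theorem ProbabilityTheory.iIndepFun.measureReal_iInter_preimage_le_pow {Ω ι κ E : Type*}
    [MeasurableSpace Ω] [MeasurableSpace E] {P : Measure Ω} [Fintype ι] {Y : κ → Ω → E}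
    (hY : iIndepFun Y P)
    {g : ι → κ} (hg : g.Injective) {T : Set E} (hT : MeasurableSet T) {q : ℝ}
    (hq : ∀ k, P.real (Y k ⁻¹' T) ≤ q) :
    P.real (⋂ i, Y (g i) ⁻¹' T) ≤ q ^ Fintype.card ι := by
  rw [measureReal_def, (hY.precomp hg).meas_iInter fun i => ⟨T, hT, rfl⟩, ENNReal.toReal_prod]
  calc ∏ i, (P (Y (g i) ⁻¹' T)).toReal ≤ ∏ _i : ι, q :=
        prod_le_prod (fun _ _ => ENNReal.toReal_nonneg) fun i _ => hq (g i)
    _ = q ^ Fintype.card ι := by rw [prod_const, card_univ]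

section DirectedCycle

variable {ι : Type*}

def HasDirectedCycle (G : ι → ι → Prop) : Prop :=
  ∃ (m : ℕ) (i : Fin (m + 1) → ι), 1 ≤ m ∧ i 0 = i (Fin.last m) ∧
    Function.Injective (fun ℓ : Fin m => i ℓ.castSucc) ∧
    ∀ ℓ : Fin m, G (i ℓ.castSucc) (i ℓ.succ)

theorem apply_castSucc_finRotate_of_apply_zero_eq_last {α : Type*} {m : ℕ}
    {i : Fin (m + 1) → α} (hi : i 0 = i (Fin.last m)) (ℓ : Fin m) :
    i (finRotate m ℓ).castSucc = i ℓ.succ := by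
  cases m with
  | zero => exact ℓ.elim0
  | succ k =>
    induction ℓ using Fin.lastCases with
    | last => rwa [finRotate_last, Fin.succ_last, Fin.castSucc_zero]
    | cast j =>
      congr 1
      ext
      simp

theorem HasDirectedCycle.exists_injective [Fintype ι] {G : ι → ι → Prop}
    (h : HasDirectedCycle G) : ∃ k < Fintype.card ι, ∃ f : Fin (k + 1) → ι,
      f.Injective ∧ ∀ ℓ, G (f ℓ) (f (finRotate _ ℓ)) := by
  obtain ⟨m, i, hm, hi, hinj, hG⟩ := h
  obtain ⟨k, rfl⟩ : ∃ k, m = k + 1 := ⟨m - 1, by omega⟩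
  refine ⟨k, by simpa using Fintype.card_le_of_injective _ hinj, _, hinj, fun ℓ => ?_⟩
  simpa only [apply_castSucc_finRotate_of_apply_zero_eq_last hi] using hG ℓ

theorem measureReal_hasDirectedCycle_le [Fintype ι] {Ω E : Type*} [MeasurableSpace Ω]
    [MeasurableSpace E] {P : Measure Ω} [IsFiniteMeasure P] {X : ι → ι → Ω → E}
    (hX : iIndepFun (fun p : ι × ι => X p.1 p.2) P) {T : Set E} (hT : MeasurableSet T) {q : ℝ}
    (hq0 : 0 ≤ q) (hq : ∀ i j, P.real (X i j ⁻¹' T) ≤ q) :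
    P.real {ω | HasDirectedCycle fun i j => X i j ω ∈ T} ≤
      ∑ k ∈ range (Fintype.card ι), (Fintype.card ι * q) ^ (k + 1) := by
  classical
  let cycleEvent (k : ℕ) (f : Fin (k + 1) → ι) : Set Ω :=
    ⋂ ℓ, (fun ω => X (f ℓ) (f (finRotate _ ℓ)) ω) ⁻¹' T
  let injectiveMaps (k : ℕ) : Finset (Fin (k + 1) → ι) := univ.filter Function.Injective
  have hcover : {ω | HasDirectedCycle fun i j => X i j ω ∈ T} ⊆
      ⋃ k ∈ range (Fintype.card ι), ⋃ f ∈ injectiveMaps k, cycleEvent k f := by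
    intro ω (hω : HasDirectedCycle fun i j => X i j ω ∈ T)
    obtain ⟨k, hk, f, hf, hG⟩ := hω.exists_injective
    simp only [Set.mem_iUnion]
    exact ⟨k, mem_range.2 hk, f, mem_filter.2 ⟨mem_univ f, hf⟩, Set.mem_iInter.2 hG⟩
  have hcycle (k : ℕ) (f : Fin (k + 1) → ι) (hf : f ∈ injectiveMaps k) :
      P.real (cycleEvent k f) ≤ q ^ (k + 1) := by
    have := hX.measureReal_iInter_preimage_le_pow (g := fun ℓ => (f ℓ, f (finRotate _ ℓ)))
      (fun _ _ h => (mem_filter.1 hf).2 (congrArg Prod.fst h)) hT fun p => hq p.1 p.2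
    rwa [Fintype.card_fin] at this
  have hcard (k : ℕ) : ((injectiveMaps k).card : ℝ) ≤ Fintype.card ι ^ (k + 1) := by
    exact_mod_cast (card_filter_le _ _).trans (by simp)
  calc P.real {ω | HasDirectedCycle fun i j => X i j ω ∈ T}
      ≤ ∑ k ∈ range (Fintype.card ι), ∑ f ∈ injectiveMaps k, P.real (cycleEvent k f) :=
        (measureReal_mono hcover (measure_ne_top _ _)).trans <|
          (measureReal_biUnion_finset_le _ _).trans <|
          sum_le_sum fun _ _ => measureReal_biUnion_finset_le _ _
    _ ≤ ∑ k ∈ range (Fintype.card ι), ∑ _f ∈ injectiveMaps k, q ^ (k + 1) :=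
        sum_le_sum fun k _ => sum_le_sum fun f hf => hcycle k f hf
    _ ≤ ∑ k ∈ range (Fintype.card ι), (Fintype.card ι * q) ^ (k + 1) := by
        gcongr with k
        rw [sum_const, nsmul_eq_mul, mul_pow]
        gcongr
        exact hcard k

end DirectedCycle

theorem heavy_entries_digraph_acyclic_general
    {Ω : Type*} [MeasurableSpace Ω] (P : Measure Ω) [IsProbabilityMeasure P]
    {N : ℕ} (α β : ℝ)
    (X : Fin N → Fin N → Ω → ℂ)
    (hindep : iIndepFun
      (fun p : Fin N × Fin N => X p.1 p.2) P)
    (htail : ∀ i j,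
      (P {ω | (N : ℝ) ^ β < ‖X i j ω‖}).toReal ≤ (N : ℝ) ^ (-(α * β)))
    (hN : 2 ≤ (N : ℝ) ^ (α * β - 1)) :
    (P {ω | ∃ (m : ℕ) (i : Fin (m + 1) → Fin N), 1 ≤ m ∧ i 0 = i (Fin.last m) ∧
        Function.Injective (fun ℓ : Fin m => i ℓ.castSucc) ∧
        ∀ ℓ : Fin m, (N : ℝ) ^ β < ‖X (i ℓ.castSucc) (i ℓ.succ) ω‖}).toReal
      ≤ 2 * (N : ℝ) ^ (1 - α * β) := by
  have hNpos : (0 : ℝ) < N := by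
    rcases N.eq_zero_or_pos with rfl | hpos
    · linarith [Real.zero_rpow_le_one (α * β - 1), Nat.cast_zero (R := ℝ) ▸ hN]
    · exact_mod_cast hpos
  have hr : (N : ℝ) * (N : ℝ) ^ (-(α * β)) = (N : ℝ) ^ (1 - α * β) := by
    rw [sub_eq_add_neg, Real.rpow_add hNpos, Real.rpow_one]
  have hr_half : (N : ℝ) ^ (1 - α * β) ≤ 1 / 2 := by
    rw [show 1 - α * β = -(α * β - 1) by ring, Real.rpow_neg hNpos.le, one_div]
    exact inv_anti₀ two_pos hN
  have hT : MeasurableSet {z : ℂ | (N : ℝ) ^ β < ‖z‖} :=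
    measurableSet_lt measurable_const measurable_norm
  have hbound := measureReal_hasDirectedCycle_le hindep hT (by positivity) htail
  rw [Fintype.card_fin, hr] at hbound
  exact hbound.trans (sum_range_pow_succ_le_two_mul (by positivity) hr_half N)

/-- Let `α, β > 0` with `αβ > 1`, and let `X` be an `N × N` random matrix with
independent entries satisfying `P(|X_{i,j}| > N^β) ≤ N^{-αβ}` for all `i, j`. If
`N^{αβ-1} ≥ 2`, then the probability that the digraph on `[N]` with edges
`{(i,j) : |X_{i,j}| > N^β}` contains a directed cycle is at most `2·N^{1-αβ}`. -/
theorem heavy_entries_digraph_acyclic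
    {Ω : Type*} [MeasurableSpace Ω] (P : Measure Ω) [IsProbabilityMeasure P]
    {N : ℕ} (α β : ℝ) (hα : 0 < α) (hβ : 0 < β) (hαβ : 1 < α * β)
    (X : Fin N → Fin N → Ω → ℂ) (hXm : ∀ i j, Measurable (X i j))
    (hindep : iIndepFun
      (fun p : Fin N × Fin N => X p.1 p.2) P)
    (htail : ∀ i j,
      (P {ω | (N : ℝ) ^ β < ‖X i j ω‖}).toReal ≤ (N : ℝ) ^ (-(α * β)))
    (hN : 2 ≤ (N : ℝ) ^ (α * β - 1)) :
    (P {ω | ∃ (m : ℕ) (i : Fin (m + 1) → Fin N), 1 ≤ m ∧ i 0 = i (Fin.last m) ∧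
        Function.Injective (fun ℓ : Fin m => i ℓ.castSucc) ∧
        ∀ ℓ : Fin m, (N : ℝ) ^ β < ‖X (i ℓ.castSucc) (i ℓ.succ) ω‖}).toReal
      ≤ 2 * (N : ℝ) ^ (1 - α * β) :=
  heavy_entries_digraph_acyclic_general P α β X hindep htail hN
end
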